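/- arXiv:1711.10923 — 10 statements merged into one kernel-verified Lean document; each statement's English description precedes it below -/
import Mathlib

section
/- Suppose player 1 plays the good strategy s₁* (with parameter ε > 0) and player 2 plays an arbitrary memory strategy s₂. Then for every initial point x̄₁ ∈ 𝔖, the trajectory (x̄_t)_{t≥1} = ((x̄¹_t, x̄²_t))_{t≥1} of the dynamical system induced by the profile (s₁*, s₂) satisfies liminf_{t→∞} x̄¹_t ≥ 1 and limsup_{t→∞} x̄²_t ≤ 2. -/
/- Actions: `true` = C (cooperate), `false` = D (defect). -/

abbrev Pt := ℝ × ℝ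

def payoffPD : Bool → Bool → Pt
  | true,  true  => (2, 2)
  | true,  false => (0, 3)
  | false, true  => (3, 0)
  | false, false => (1, 1)

/-- The paper's `𝔖`. -/
def SPD : Set Pt := convexHull ℝ {(2, 2), (0, 3), (3, 0), (1, 1)}

open Classical in
/-- Smale's good strategy `s₁*` of player 1. -/
noncomputable def good1 (ε : ℝ) (x : Pt) : Bool :=
  if x.2 < x.1 + ε ∧ 1 ≤ x.1 ∧ x.2 ≤ 2 then true else false

/-- Trajectories are indexed from stage 1; `x 0` is unconstrained. -/
def IsTrajPD (f : Pt → Pt) (x : ℕ → Pt) : Prop :=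
  x 1 ∈ SPD ∧ ∀ t : ℕ, 1 ≤ t →
    x (t + 1) = ((t : ℝ) + 1)⁻¹ • ((t : ℝ) • x t + f (x t))

/-! The good strategy is self-correcting. Write `Sₜ = t • x̄ₜ` for the cumulative payoff. Whenever
player 1 cooperates she already has `x̄¹ₜ ≥ 1` and `x̄²ₜ ≤ 2`, and whenever she defects her stage
payoff is at least `1` and her opponent's at most `1`. Either way the invariant
`S¹ₜ ≥ t - 1`, `S²ₜ ≤ 2t + 1` survives one more stage, so `x̄¹ₜ ≥ 1 - 1/t` and `x̄²ₜ ≤ 2 + 1/t`.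
Since the trajectory stays in the bounded set `𝔖`, these bounds pass to the liminf and limsup. -/

open Filter Topology

section LimitBounds

variable {α β : Type*} [ConditionallyCompleteLinearOrder β] [TopologicalSpace β] [OrderTopology β]
  {l : Filter α} [l.NeBot] {u v : α → β} {a : β}

theorem le_liminf_of_tendsto_of_le (hv : Tendsto v l (𝓝 a)) (hvu : ∀ᶠ t in l, v t ≤ u t)
    (hu : IsBoundedUnder (· ≤ ·) l u) : a ≤ liminf u l :=
  hv.liminf_eq ▸ liminf_le_liminf hvu hv.isBoundedUnder_ge hu.isCoboundedUnder_ge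

theorem limsup_le_of_tendsto_of_le (hv : Tendsto v l (𝓝 a)) (huv : ∀ᶠ t in l, u t ≤ v t)
    (hu : IsBoundedUnder (· ≥ ·) l u) : limsup u l ≤ a :=
  hv.limsup_eq ▸ limsup_le_limsup huv hu.isCoboundedUnder_le hv.isBoundedUnder_le

end LimitBounds

theorem payoffPD_mem_SPD (a b : Bool) : payoffPD a b ∈ SPD :=
  subset_convexHull ℝ _ (by cases a <;> cases b <;> simp [payoffPD])

theorem SPD_subset_Icc : SPD ⊆ Set.Icc 0 3 ×ˢ Set.Icc 0 3 :=
  convexHull_min (by simp [Set.insert_subset_iff]; norm_num)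
    ((convex_Icc 0 3).prod (convex_Icc 0 3))

namespace IsTrajPD

variable {f : Pt → Pt} {x : ℕ → Pt} {t : ℕ}

theorem succ_smul (hx : IsTrajPD f x) (ht : 1 ≤ t) :
    ((t + 1 : ℕ) : ℝ) • x (t + 1) = (t : ℝ) • x t + f (x t) := by
  rw [hx.2 t ht, smul_smul, Nat.cast_succ, mul_inv_cancel₀ (by positivity), one_smul]

theorem mem_of_convex {K : Set Pt} (hx : IsTrajPD f x) (hK : Convex ℝ K) (h₁ : x 1 ∈ K)
    (hf : ∀ p ∈ K, f p ∈ K) (ht : 1 ≤ t) : x t ∈ K := by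
  induction t, ht using Nat.le_induction with
  | base => exact h₁
  | succ t ht ih =>
    have hpos : (0 : ℝ) < t + 1 := by positivity
    rw [hx.2 t ht, smul_add, smul_smul]
    exact hK ih (hf _ ih) (by positivity) (by positivity) (by field_simp)

theorem mem_SPD {a b : Pt → Bool} (hx : IsTrajPD (fun p => payoffPD (a p) (b p)) x)
    (ht : 1 ≤ t) : x t ∈ SPD :=
  hx.mem_of_convex (convex_convexHull ℝ _) hx.1 (fun _ _ => payoffPD_mem_SPD _ _) ht

end IsTrajPD

section GoodStrategy

variable (ε : ℝ) (p : Pt) (b : Bool) {s : ℝ}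

theorem good1_payoff_fst (hs : 0 ≤ s) (h : s - 1 ≤ s * p.1) :
    s ≤ s * p.1 + (payoffPD (good1 ε p) b).1 := by
  unfold good1
  split_ifs <;> cases b <;> simp only [payoffPD] <;> nlinarith

theorem good1_payoff_snd (hs : 0 ≤ s) (h : s * p.2 ≤ 2 * s + 1) :
    s * p.2 + (payoffPD (good1 ε p) b).2 ≤ 2 * (s + 1) + 1 := by
  unfold good1
  split_ifs <;> cases b <;> simp only [payoffPD] <;> nlinarith

end GoodStrategy

theorem IsTrajPD.good1_cumulative_bounds {ε : ℝ} {s₂ : Pt → Bool} {x : ℕ → Pt}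
    (hx : IsTrajPD (fun p => payoffPD (good1 ε p) (s₂ p)) x) {t : ℕ} (ht : 1 ≤ t) :
    (t : ℝ) - 1 ≤ t * (x t).1 ∧ t * (x t).2 ≤ 2 * t + 1 := by
  induction t, ht using Nat.le_induction with
  | base =>
    obtain ⟨⟨h₁, -⟩, -, h₂⟩ := SPD_subset_Icc hx.1
    simp only [Nat.cast_one, one_mul]
    constructor <;> linarith
  | succ t ht ih =>
    have hstep := hx.succ_smul ht
    have h₁ := congrArg Prod.fst hstep
    have h₂ := congrArg Prod.snd hstep
    simp only [Prod.smul_fst, Prod.smul_snd, Prod.fst_add, Prod.snd_add, smul_eq_mul] at h₁ h₂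
    rw [h₁, h₂, Nat.cast_succ, add_sub_cancel_right]
    exact ⟨good1_payoff_fst ε _ _ t.cast_nonneg ih.1, good1_payoff_snd ε _ _ t.cast_nonneg ih.2⟩

theorem stmt0_general (ε : ℝ) (s₂ : Pt → Bool) (x : ℕ → Pt)
    (hx : IsTrajPD (fun p => payoffPD (good1 ε p) (s₂ p)) x) :
    1 ≤ liminf (fun t => (x t).1) atTop ∧ limsup (fun t => (x t).2) atTop ≤ 2 := by
  have hIcc : ∀ᶠ t in atTop, x t ∈ Set.Icc 0 3 ×ˢ Set.Icc 0 3 :=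
    eventually_atTop.2 ⟨1, fun t ht => SPD_subset_Icc (hx.mem_SPD ht)⟩
  have hbounds : ∀ᶠ t : ℕ in atTop, 1 - 1 / (t : ℝ) ≤ (x t).1 ∧ (x t).2 ≤ 2 + 1 / (t : ℝ) :=
    eventually_atTop.2 ⟨1, fun t ht => by
      have htpos : (0 : ℝ) < t := by exact_mod_cast ht
      obtain ⟨h₁, h₂⟩ := hx.good1_cumulative_bounds ht
      rw [one_sub_div htpos.ne', div_le_iff₀ htpos, ← sub_le_iff_le_add', le_div_iff₀ htpos]
      constructor <;> linarith⟩
  have hdecay := tendsto_one_div_atTop_nhds_zero_nat (𝕜 := ℝ)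
  constructor
  · exact le_liminf_of_tendsto_of_le (by simpa using hdecay.const_sub 1)
      (hbounds.mono fun _ h => h.1) ⟨3, eventually_map.2 (hIcc.mono fun _ h => h.1.2)⟩
  · exact limsup_le_of_tendsto_of_le (by simpa using hdecay.const_add 2)
      (hbounds.mono fun _ h => h.2) ⟨0, eventually_map.2 (hIcc.mono fun _ h => h.2.1)⟩

/-- If player 1 plays the good strategy `good1 ε` and player 2 plays an arbitrary
memory strategy `s₂`, then along every trajectory of average payoffs from any
initial point in 𝔖 we have liminf x̄¹_t ≥ 1 and limsup x̄²_t ≤ 2. -/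
theorem stmt0 (ε : ℝ) (hε : 0 < ε) (s₂ : Pt → Bool) (x : ℕ → Pt)
    (hx : IsTrajPD (fun p => payoffPD (good1 ε p) (s₂ p)) x) :
    1 ≤ liminf (fun t => (x t).1) atTop ∧ limsup (fun t => (x t).2) atTop ≤ 2 :=
  stmt0_general ε s₂ x hx
end

section
/- Suppose both players play good strategies s₁* and s₂* (with the same parameter ε > 0). Then for every initial point x̄₁ ∈ 𝔖, the trajectory (x̄_t)_{t≥1} of the dynamical system induced by the profile (s₁*, s₂*) converges to (2,2) as t → ∞. -/
open Classical in
/-- Smale's good strategy of player 2 (with parameter ε):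
    play C iff x₁ < x₂ + ε, x₂ ≥ 1 and x₁ ≤ 2. -/
noncomputable def good2 (ε : ℝ) (x : Pt) : Bool :=
  if x.1 < x.2 + ε ∧ 1 ≤ x.2 ∧ x.1 ≤ 2 then true else false

def Hset (p : Pt) : Prop :=
  3 ≤ p.1 + 2*p.2 ∧ p.1 + 2*p.2 ≤ 6 ∧ 3 ≤ 2*p.1 + p.2 ∧ 2*p.1 + p.2 ≤ 6

lemma hset_of_mem_SPD {p : Pt} (hp : p ∈ SPD) : Hset p := by
  have h1 : IsLinearMap ℝ (fun q : Pt => q.1 + 2*q.2) := by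
    constructor <;> intros <;> simp [Prod.smul_fst, Prod.smul_snd, smul_eq_mul] <;> ring
  have h2 : IsLinearMap ℝ (fun q : Pt => 2*q.1 + q.2) := by
    constructor <;> intros <;> simp [Prod.smul_fst, Prod.smul_snd, smul_eq_mul] <;> ring
  have hsub : SPD ⊆ {q : Pt | Hset q} := by
    apply convexHull_min
    · intro q hq
      simp only [Set.mem_insert_iff, Set.mem_singleton_iff] at hq
      rcases hq with h|h|h|h <;> subst h <;> norm_num [Hset]
    · have c1 := convex_halfSpace_ge h1 3
      have c2 := convex_halfSpace_le h1 6
      have c3 := convex_halfSpace_ge h2 3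
      have c4 := convex_halfSpace_le h2 6
      have he : {q : Pt | Hset q}
          = {w : Pt | 3 ≤ w.1+2*w.2} ∩ ({w : Pt | w.1+2*w.2 ≤ 6}
            ∩ ({w : Pt | 3 ≤ 2*w.1+w.2} ∩ {w : Pt | 2*w.1+w.2 ≤ 6})) := by
        ext q; simp only [Set.mem_setOf_eq, Set.mem_inter_iff, Hset]
      rw [he]
      exact c1.inter (c2.inter (c3.inter c4))
  exact hsub hp

lemma Hset_bounds {p : Pt} (h : Hset p) :
    0 ≤ p.1 ∧ p.1 ≤ 3 ∧ 0 ≤ p.2 ∧ p.2 ≤ 3 ∧ 2 ≤ p.1 + p.2 ∧ p.1 + p.2 ≤ 4 := by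
  obtain ⟨h1,h2,h3,h4⟩ := h
  exact ⟨by linarith, by linarith, by linarith, by linarith, by linarith, by linarith⟩

lemma keyCase (ε : ℝ) (hε : 0 < ε) (p : Pt) (hp : Hset p) :
    (payoffPD (good1 ε p) (good2 ε p) = (2,2) ∧ |p.1 - p.2| < ε
        ∧ 1 ≤ p.1 ∧ p.1 ≤ 2 ∧ 1 ≤ p.2 ∧ p.2 ≤ 2)
  ∨ (payoffPD (good1 ε p) (good2 ε p) = (0,3) ∧ 0 < p.1 - p.2
        ∧ (2 < p.1 ∨ p.2 < 1 ∨ ε ≤ p.1 - p.2))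
  ∨ (payoffPD (good1 ε p) (good2 ε p) = (3,0) ∧ 0 < p.2 - p.1
        ∧ (2 < p.2 ∨ p.1 < 1 ∨ ε ≤ p.2 - p.1)) := by
  obtain ⟨h1, h2, h3, h4⟩ := hp
  by_cases A : p.2 < p.1 + ε ∧ 1 ≤ p.1 ∧ p.2 ≤ 2 <;>
    by_cases B : p.1 < p.2 + ε ∧ 1 ≤ p.2 ∧ p.1 ≤ 2
  · left
    refine ⟨by simp [good1, good2, A, B, payoffPD], ?_, A.2.1, B.2.2, B.2.1, A.2.2⟩
    rw [abs_lt]; exact ⟨by linarith [A.1, B.1], by linarith [A.1, B.1]⟩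
  · right; left
    have hB : p.2 + ε ≤ p.1 ∨ p.2 < 1 ∨ 2 < p.1 := by
      by_contra hc; push_neg at hc; exact B hc
    refine ⟨by simp [good1, good2, A, B, payoffPD], ?_, ?_⟩
    · rcases hB with h|h|h
      · linarith
      · linarith [A.2.1]
      · linarith
    · rcases hB with h|h|h
      · exact Or.inr (Or.inr (by linarith))
      · exact Or.inr (Or.inl h)
      · exact Or.inl h
  · right; right
    have hA : p.1 + ε ≤ p.2 ∨ p.1 < 1 ∨ 2 < p.2 := by
      by_contra hc; push_neg at hc; exact A hc
    refine ⟨by simp [good1, good2, A, B, payoffPD], ?_, ?_⟩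
    · rcases hA with h|h|h
      · linarith
      · linarith [B.2.1]
      · linarith
    · rcases hA with h|h|h
      · exact Or.inr (Or.inr (by linarith))
      · exact Or.inr (Or.inl h)
      · exact Or.inl h
  · exfalso
    have hA : p.1 + ε ≤ p.2 ∨ p.1 < 1 ∨ 2 < p.2 := by
      by_contra hc; push_neg at hc; exact A hc
    have hB : p.2 + ε ≤ p.1 ∨ p.2 < 1 ∨ 2 < p.1 := by
      by_contra hc; push_neg at hc; exact B hc
    rcases hA with a|a|a <;> rcases hB with b|b|b <;> linarith

lemma abs_le_div {c X Y : ℝ} (hc : 0 < c) (h : |c * X| ≤ Y) : |X| ≤ Y / c := by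
  rw [le_div_iff₀ hc]
  calc |X| * c = |c * X| := by rw [abs_mul, abs_of_pos hc]; ring
    _ ≤ Y := h

open Filter

set_option maxHeartbeats 2000000 in
/-- If both players play good strategies with the same parameter ε > 0, then every
trajectory of average payoffs, from any initial point in 𝔖, converges to (2,2). -/
theorem stmt1 (ε : ℝ) (hε : 0 < ε) (x : ℕ → Pt)
    (hx : IsTrajPD (fun p => payoffPD (good1 ε p) (good2 ε p)) x) :
    Tendsto x atTop (nhds ((2 : ℝ), (2 : ℝ))) := by
  obtain ⟨hx1, hrec⟩ := hx
  -- component recurrences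
  have hrec1 : ∀ t : ℕ, 1 ≤ t → ((t:ℝ)+1) * (x (t+1)).1
      = (t:ℝ) * (x t).1 + (payoffPD (good1 ε (x t)) (good2 ε (x t))).1 := by
    intro t ht
    have h0 : ((t:ℝ)+1) ≠ 0 := by positivity
    rw [hrec t ht]
    simp only [Prod.smul_fst, Prod.fst_add, smul_eq_mul]
    rw [mul_inv_cancel_left₀ h0]
  have hrec2 : ∀ t : ℕ, 1 ≤ t → ((t:ℝ)+1) * (x (t+1)).2
      = (t:ℝ) * (x t).2 + (payoffPD (good1 ε (x t)) (good2 ε (x t))).2 := by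
    intro t ht
    have h0 : ((t:ℝ)+1) ≠ 0 := by positivity
    rw [hrec t ht]
    simp only [Prod.smul_snd, Prod.snd_add, smul_eq_mul]
    rw [mul_inv_cancel_left₀ h0]
  -- Hset invariance
  have hH : ∀ t:ℕ, 1 ≤ t → Hset (x t) := by
    intro t ht
    induction t, ht using Nat.le_induction with
    | base => exact hset_of_mem_SPD hx1
    | succ n hn ih =>
      have hn0 : (0:ℝ) < (n:ℝ) := by exact_mod_cast hn
      have hn1 : (0:ℝ) < (n:ℝ) + 1 := by linarith
      have hfH : Hset (payoffPD (good1 ε (x n)) (good2 ε (x n))) := by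
        rcases keyCase ε hε (x n) ih with ⟨h,-⟩|⟨h,-,-⟩|⟨h,-,-⟩ <;> rw [h] <;>
          norm_num [Hset]
      obtain ⟨p1,p2,p3,p4⟩ := ih
      obtain ⟨q1,q2,q3,q4⟩ := hfH
      have e1 := hrec1 n hn
      have e2 := hrec2 n hn
      refine ⟨?_, ?_, ?_, ?_⟩
      · nlinarith [mul_nonneg hn0.le (sub_nonneg.mpr p1)]
      · nlinarith [mul_nonneg hn0.le (sub_nonneg.mpr p2)]
      · nlinarith [mul_nonneg hn0.le (sub_nonneg.mpr p3)]
      · nlinarith [mul_nonneg hn0.le (sub_nonneg.mpr p4)]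
  -- difference bound |d t| <= 3/t
  have hd : ∀ t:ℕ, 1 ≤ t → |(x t).1 - (x t).2| ≤ 3 / (t:ℝ) := by
    intro t ht
    induction t, ht using Nat.le_induction with
    | base =>
      obtain ⟨hu0, hu3, hv0, hv3, -, -⟩ := Hset_bounds (hH 1 le_rfl)
      rw [Nat.cast_one, abs_le]
      constructor <;> linarith
    | succ n hn ih =>
      have hn0 : (0:ℝ) < (n:ℝ) := by exact_mod_cast hn
      have hn1 : (0:ℝ) < (n:ℝ) + 1 := by linarith
      have e : ((n:ℝ)+1) * ((x (n+1)).1 - (x (n+1)).2)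
          = (n:ℝ) * ((x n).1 - (x n).2)
            + ((payoffPD (good1 ε (x n)) (good2 ε (x n))).1
              - (payoffPD (good1 ε (x n)) (good2 ε (x n))).2) := by
        linear_combination (hrec1 n hn) - (hrec2 n hn)
      have hnd : |(n:ℝ) * ((x n).1 - (x n).2)| ≤ 3 := by
        rw [abs_mul, abs_of_pos hn0]
        calc (n:ℝ) * |(x n).1 - (x n).2| ≤ (n:ℝ) * (3/(n:ℝ)) :=
              mul_le_mul_of_nonneg_left ih hn0.le
          _ = 3 := by field_simp
      obtain ⟨hnd1, hnd2⟩ := abs_le.mp hnd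
      push_cast
      apply abs_le_div hn1
      rcases keyCase ε hε (x n) (hH n hn) with ⟨hg,-⟩|⟨hg,hdpos,-⟩|⟨hg,hdpos,-⟩ <;>
        rw [hg] at e <;> norm_num at e <;> rw [e, abs_le] <;> constructor
      · linarith
      · linarith
      · nlinarith [mul_nonneg hn0.le hdpos.le]
      · linarith
      · linarith
      · nlinarith [mul_nonneg hn0.le hdpos.le]
  -- sum lower bound s t >= 3 - 1/t
  have hslb : ∀ t:ℕ, 1 ≤ t → 3 - 1/(t:ℝ) ≤ (x t).1 + (x t).2 := by
    intro t ht
    induction t, ht using Nat.le_induction with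
    | base =>
      obtain ⟨-,-,-,-,hs2,-⟩ := Hset_bounds (hH 1 le_rfl)
      rw [Nat.cast_one]
      norm_num
      linarith
    | succ n hn ih =>
      have hn0 : (0:ℝ) < (n:ℝ) := by exact_mod_cast hn
      have hn1 : (0:ℝ) < (n:ℝ) + 1 := by linarith
      have e : ((n:ℝ)+1) * ((x (n+1)).1 + (x (n+1)).2)
          = (n:ℝ) * ((x n).1 + (x n).2)
            + ((payoffPD (good1 ε (x n)) (good2 ε (x n))).1
              + (payoffPD (good1 ε (x n)) (good2 ε (x n))).2) := by
        linear_combination (hrec1 n hn) + (hrec2 n hn)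
      have hσ : 3 ≤ (payoffPD (good1 ε (x n)) (good2 ε (x n))).1
            + (payoffPD (good1 ε (x n)) (good2 ε (x n))).2 := by
        rcases keyCase ε hε (x n) (hH n hn) with ⟨hg,-⟩|⟨hg,-,-⟩|⟨hg,-,-⟩ <;>
          rw [hg] <;> norm_num
      have hinv : (n:ℝ) * (1/(n:ℝ)) = 1 := by field_simp
      have hinv1 : ((n:ℝ)+1) * (1/((n:ℝ)+1)) = 1 := by field_simp
      have hns : 3*(n:ℝ) - 1 ≤ (n:ℝ) * ((x n).1 + (x n).2) := by
        nlinarith [mul_le_mul_of_nonneg_left ih hn0.le]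
      push_cast
      nlinarith [e, hσ, hns, hinv1, hn1]
  -- threshold
  set T : ℕ := max 5 (⌈3/ε⌉₊ + 1) with hTdef
  have hT1 : 1 ≤ T := le_trans (by norm_num) (le_max_left 5 (⌈3/ε⌉₊ + 1))
  have hT5r : (5:ℝ) ≤ (T:ℝ) := by exact_mod_cast le_max_left 5 (⌈3/ε⌉₊ + 1)
  have hTε : 3/ε < (T:ℝ) := by
    have hc : ((⌈3/ε⌉₊ + 1 : ℕ):ℝ) ≤ (T:ℝ) := by
      exact_mod_cast le_max_right 5 (⌈3/ε⌉₊ + 1)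
    push_cast at hc
    linarith [Nat.le_ceil (3/ε)]
  -- sum upper-deficiency bound for t ≥ T
  have hsK : ∀ t:ℕ, T ≤ t → 4 - (2*(T:ℝ)+4)/(t:ℝ) ≤ (x t).1 + (x t).2 := by
    intro t ht
    induction t, ht using Nat.le_induction with
    | base =>
      have hT0 : (0:ℝ) < (T:ℝ) := by linarith
      have h2s := (Hset_bounds (hH T hT1)).2.2.2.2.1
      have h2K : 2 ≤ (2*(T:ℝ)+4)/(T:ℝ) := by rw [le_div_iff₀ hT0]; nlinarith
      linarith
    | succ n hn ih =>
      have htT : (T:ℝ) ≤ (n:ℝ) := by exact_mod_cast hn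
      have hn0 : (0:ℝ) < (n:ℝ) := by linarith
      have hn1 : (0:ℝ) < (n:ℝ)+1 := by linarith
      have hnn1 : 1 ≤ n := le_trans hT1 hn
      have e : ((n:ℝ)+1) * ((x (n+1)).1 + (x (n+1)).2)
          = (n:ℝ) * ((x n).1 + (x n).2)
            + ((payoffPD (good1 ε (x n)) (good2 ε (x n))).1
              + (payoffPD (good1 ε (x n)) (good2 ε (x n))).2) := by
        linear_combination (hrec1 n hnn1) + (hrec2 n hnn1)
      have hKinv : (n:ℝ) * ((2*(T:ℝ)+4)/(n:ℝ)) = 2*(T:ℝ)+4 := by field_simp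
      have hKinv1 : ((n:ℝ)+1) * ((2*(T:ℝ)+4)/((n:ℝ)+1)) = 2*(T:ℝ)+4 := by
        field_simp
      have h3inv : (n:ℝ) * (3/(n:ℝ)) = 3 := by field_simp
      have hsl := hslb n hnn1
      have h1n : 1/(n:ℝ) ≤ 1/5 := by
        rw [div_le_div_iff₀ hn0 (by norm_num : (0:ℝ) < 5)]; linarith
      have h3nε : 3/(n:ℝ) < ε := by
        rw [div_lt_iff₀ hn0]
        have h1 : 3 < (T:ℝ) * ε := (div_lt_iff₀ hε).mp hTε
        nlinarith [mul_le_mul_of_nonneg_right htT hε.le]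
      rcases keyCase ε hε (x n) (hH n hnn1) with ⟨hg,-⟩|⟨hg,hdpos,hdisj⟩|⟨hg,hdpos,hdisj⟩
      · rw [hg] at e; norm_num at e
        have hns : 4*(n:ℝ) - (2*(T:ℝ)+4) ≤ (n:ℝ) * ((x n).1 + (x n).2) := by
          nlinarith [mul_le_mul_of_nonneg_left ih hn0.le, hKinv]
        push_cast
        nlinarith [e, hns, hKinv1]
      · rw [hg] at e; norm_num at e
        have hd3 : (x n).1 - (x n).2 ≤ 3/(n:ℝ) := (abs_le.mp (hd n hnn1)).2
        have hs4 : 4 - 3/(n:ℝ) ≤ (x n).1 + (x n).2 := by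
          rcases hdisj with h|h|h
          · linarith
          · exfalso
            have h3n : 3/(n:ℝ) ≤ 3/5 := by
              rw [div_le_div_iff₀ hn0 (by norm_num : (0:ℝ) < 5)]; linarith
            linarith
          · exfalso; linarith
        have hns : 4*(n:ℝ) - 3 ≤ (n:ℝ) * ((x n).1 + (x n).2) := by
          nlinarith [mul_le_mul_of_nonneg_left hs4 hn0.le, h3inv]
        push_cast
        nlinarith [e, hns, hKinv1, htT, hT5r]
      · rw [hg] at e; norm_num at e
        have hd3 : (x n).2 - (x n).1 ≤ 3/(n:ℝ) := by
          have := (abs_le.mp (hd n hnn1)).1; linarith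
        have hs4 : 4 - 3/(n:ℝ) ≤ (x n).1 + (x n).2 := by
          rcases hdisj with h|h|h
          · linarith
          · exfalso
            have h3n : 3/(n:ℝ) ≤ 3/5 := by
              rw [div_le_div_iff₀ hn0 (by norm_num : (0:ℝ) < 5)]; linarith
            linarith
          · exfalso; linarith
        have hns : 4*(n:ℝ) - 3 ≤ (n:ℝ) * ((x n).1 + (x n).2) := by
          nlinarith [mul_le_mul_of_nonneg_left hs4 hn0.le, h3inv]
        push_cast
        nlinarith [e, hns, hKinv1, htT, hT5r]
  -- final squeeze
  have hev1 : ∀ᶠ t:ℕ in atTop, ‖(x t).1 - 2‖ ≤ (2*(T:ℝ)+7)/(t:ℝ) := by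
    filter_upwards [eventually_ge_atTop T] with t ht
    have ht1 : 1 ≤ t := le_trans hT1 ht
    have ht0 : (0:ℝ) < (t:ℝ) := by exact_mod_cast ht1
    have h1 := hsK t ht
    have h2 : (x t).1 + (x t).2 ≤ 4 := (Hset_bounds (hH t ht1)).2.2.2.2.2
    obtain ⟨h3a, h3b⟩ := abs_le.mp (hd t ht1)
    have hKinv : (t:ℝ) * ((2*(T:ℝ)+4)/(t:ℝ)) = 2*(T:ℝ)+4 := by field_simp
    have h3inv : (t:ℝ) * (3/(t:ℝ)) = 3 := by field_simp
    have e1 : 4*(t:ℝ) - (2*(T:ℝ)+4) ≤ (t:ℝ) * ((x t).1 + (x t).2) := by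
      nlinarith [mul_le_mul_of_nonneg_left h1 ht0.le, hKinv]
    have e2 : (t:ℝ) * ((x t).1 + (x t).2) ≤ 4*(t:ℝ) := by nlinarith
    have e3 : (t:ℝ) * ((x t).1 - (x t).2) ≤ 3 := by
      nlinarith [mul_le_mul_of_nonneg_left h3b ht0.le, h3inv]
    have e4 : -3 ≤ (t:ℝ) * ((x t).1 - (x t).2) := by
      nlinarith [mul_le_mul_of_nonneg_left h3a ht0.le, h3inv]
    rw [Real.norm_eq_abs]
    apply abs_le_div ht0
    rw [abs_le]
    constructor <;> nlinarith [e1, e2, e3, e4, hT5r, ht0]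
  have hev2 : ∀ᶠ t:ℕ in atTop, ‖(x t).2 - 2‖ ≤ (2*(T:ℝ)+7)/(t:ℝ) := by
    filter_upwards [eventually_ge_atTop T] with t ht
    have ht1 : 1 ≤ t := le_trans hT1 ht
    have ht0 : (0:ℝ) < (t:ℝ) := by exact_mod_cast ht1
    have h1 := hsK t ht
    have h2 : (x t).1 + (x t).2 ≤ 4 := (Hset_bounds (hH t ht1)).2.2.2.2.2
    obtain ⟨h3a, h3b⟩ := abs_le.mp (hd t ht1)
    have hKinv : (t:ℝ) * ((2*(T:ℝ)+4)/(t:ℝ)) = 2*(T:ℝ)+4 := by field_simp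
    have h3inv : (t:ℝ) * (3/(t:ℝ)) = 3 := by field_simp
    have e1 : 4*(t:ℝ) - (2*(T:ℝ)+4) ≤ (t:ℝ) * ((x t).1 + (x t).2) := by
      nlinarith [mul_le_mul_of_nonneg_left h1 ht0.le, hKinv]
    have e2 : (t:ℝ) * ((x t).1 + (x t).2) ≤ 4*(t:ℝ) := by nlinarith
    have e3 : (t:ℝ) * ((x t).1 - (x t).2) ≤ 3 := by
      nlinarith [mul_le_mul_of_nonneg_left h3b ht0.le, h3inv]
    have e4 : -3 ≤ (t:ℝ) * ((x t).1 - (x t).2) := by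
      nlinarith [mul_le_mul_of_nonneg_left h3a ht0.le, h3inv]
    rw [Real.norm_eq_abs]
    apply abs_le_div ht0
    rw [abs_le]
    constructor <;> nlinarith [e1, e2, e3, e4, hT5r, ht0]
  have hc1 : Tendsto (fun t:ℕ => (x t).1) atTop (nhds 2) := by
    rw [← tendsto_sub_nhds_zero_iff]
    exact squeeze_zero_norm' hev1 (tendsto_const_div_atTop_nhds_zero_nat _)
  have hc2 : Tendsto (fun t:ℕ => (x t).2) atTop (nhds 2) := by
    rw [← tendsto_sub_nhds_zero_iff]
    exact squeeze_zero_norm' hev2 (tendsto_const_div_atTop_nhds_zero_nat _)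
  exact hc1.prodMk_nhds hc2
end

section
/- Define the payoff of player i in the repeated game for a strategy profile s and initial point x̄₁ as limsup_{t→∞} x̄ⁱ_t along the trajectory of the induced dynamical system. Then the profile of good strategies (s₁*, s₂*) (with parameter ε > 0) is a Nash equilibrium in the set of memory strategies: for every initial point x̄₁ ∈ 𝔖, the profile (s₁*, s₂*) gives both players payoff 2, while for every memory strategy s₂ of player 2 the payoff of player 2 under (s₁*, s₂) is at most 2, and for every memory strategy s₁ of player 1 the payoff of player 1 under (s₁, s₂*) is at most 2. -/
open Filter

namespace SmaleAux

open Topology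

/-- The polytope inequalities cutting out 𝔖. -/
def inS (p : Pt) : Prop :=
  3 ≤ 2*p.1 + p.2 ∧ 2*p.1 + p.2 ≤ 6 ∧ 3 ≤ p.1 + 2*p.2 ∧ p.1 + 2*p.2 ≤ 6

lemma SPD_subset_inS : SPD ⊆ {p | inS p} := by
  apply convexHull_min
  · rintro p hp
    simp only [Set.mem_insert_iff, Set.mem_singleton_iff] at hp
    rcases hp with rfl|rfl|rfl|rfl <;> norm_num [inS]
  · rintro p hp q hq a b ha hb hab
    simp only [Set.mem_setOf_eq, inS] at *
    obtain ⟨h1,h2,h3,h4⟩ := hp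
    obtain ⟨g1,g2,g3,g4⟩ := hq
    refine ⟨?_,?_,?_,?_⟩ <;>
      simp only [Prod.fst_add, Prod.snd_add, Prod.smul_fst, Prod.smul_snd, smul_eq_mul] <;>
      nlinarith

lemma inS_bounds {p : Pt} (h : inS p) :
    0 ≤ p.1 ∧ p.1 ≤ 3 ∧ 0 ≤ p.2 ∧ p.2 ≤ 3 := by
  obtain ⟨h1,h2,h3,h4⟩ := h
  exact ⟨by linarith, by linarith, by linarith, by linarith⟩

lemma payoff_inS (i j : Bool) : inS (payoffPD i j) := by
  cases i <;> cases j <;> norm_num [payoffPD, inS]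

lemma traj_rec {f : Pt → Pt} {x : ℕ → Pt} (h : IsTrajPD f x) {t : ℕ} (ht : 1 ≤ t) :
    ((t:ℝ)+1) * (x (t+1)).1 = (t:ℝ) * (x t).1 + (f (x t)).1 ∧
    ((t:ℝ)+1) * (x (t+1)).2 = (t:ℝ) * (x t).2 + (f (x t)).2 := by
  have e := h.2 t ht
  have ht0 : ((t:ℝ)+1) ≠ 0 := by positivity
  constructor
  · have e1 : (x (t+1)).1 = ((t:ℝ)+1)⁻¹ * ((t:ℝ) * (x t).1 + (f (x t)).1) := by
      rw [e]; simp [smul_eq_mul]; ring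
    rw [e1]; field_simp
  · have e2 : (x (t+1)).2 = ((t:ℝ)+1)⁻¹ * ((t:ℝ) * (x t).2 + (f (x t)).2) := by
      rw [e]; simp [smul_eq_mul]; ring
    rw [e2]; field_simp

lemma lin_lower {t A B c : ℝ} (ht : 1 ≤ t) (hA : 3 ≤ A) (hc : 3 ≤ c)
    (hB : (t+1) * B = t * A + c) : 3 ≤ B := by
  nlinarith [mul_nonneg (by linarith : (0:ℝ) ≤ t) (by linarith : (0:ℝ) ≤ A - 3)]

lemma lin_upper {t A B c : ℝ} (ht : 1 ≤ t) (hA : A ≤ 6) (hc : c ≤ 6)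
    (hB : (t+1) * B = t * A + c) : B ≤ 6 := by
  nlinarith [mul_nonneg (by linarith : (0:ℝ) ≤ t) (by linarith : (0:ℝ) ≤ 6 - A)]

lemma traj_inS {f : Pt → Pt} {x : ℕ → Pt} (h : IsTrajPD f x)
    (hf : ∀ p, inS (f p)) : ∀ t, 1 ≤ t → inS (x t) := by
  intro t ht
  induction t with
  | zero => omega
  | succ n ih =>
    rcases Nat.lt_or_ge 0 n with h1|h1
    · have hn : 1 ≤ n := h1
      have hx := ih hn
      obtain ⟨e1, e2⟩ := traj_rec h hn
      obtain ⟨a1,a2,a3,a4⟩ := hx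
      obtain ⟨b1,b2,b3,b4⟩ := hf (x n)
      have hn' : (1:ℝ) ≤ (n:ℝ) := by exact_mod_cast hn
      have k1 : ((n:ℝ)+1) * (2*(x (n+1)).1 + (x (n+1)).2)
          = (n:ℝ)*(2*(x n).1 + (x n).2) + (2*(f (x n)).1 + (f (x n)).2) := by linear_combination 2*e1 + e2
      have k2 : ((n:ℝ)+1) * ((x (n+1)).1 + 2*(x (n+1)).2)
          = (n:ℝ)*((x n).1 + 2*(x n).2) + ((f (x n)).1 + 2*(f (x n)).2) := by linear_combination e1 + 2*e2
      exact ⟨lin_lower hn' a1 b1 k1, lin_upper hn' a2 b2 k1,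
             lin_lower hn' a3 b3 k2, lin_upper hn' a4 b4 k2⟩
    · have : n = 0 := by omega
      subst this
      exact SPD_subset_inS h.1

lemma tri {ε : ℝ} (hε : 0 < ε) {p : Pt} (hp : inS p) :
    ((p.2 < p.1 + ε ∧ 1 ≤ p.1 ∧ p.2 ≤ 2) ∧ (p.1 < p.2 + ε ∧ 1 ≤ p.2 ∧ p.1 ≤ 2) ∧
      payoffPD (good1 ε p) (good2 ε p) = (2,2))
  ∨ ((p.2 < p.1 + ε ∧ 1 ≤ p.1 ∧ p.2 ≤ 2) ∧ ¬(p.1 < p.2 + ε ∧ 1 ≤ p.2 ∧ p.1 ≤ 2) ∧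
      payoffPD (good1 ε p) (good2 ε p) = (0,3))
  ∨ (¬(p.2 < p.1 + ε ∧ 1 ≤ p.1 ∧ p.2 ≤ 2) ∧ (p.1 < p.2 + ε ∧ 1 ≤ p.2 ∧ p.1 ≤ 2) ∧
      payoffPD (good1 ε p) (good2 ε p) = (3,0)) := by
  by_cases h1 : p.2 < p.1 + ε ∧ 1 ≤ p.1 ∧ p.2 ≤ 2 <;>
    by_cases h2 : p.1 < p.2 + ε ∧ 1 ≤ p.2 ∧ p.1 ≤ 2
  · exact Or.inl ⟨h1, h2, by simp [good1, good2, h1, h2, payoffPD]⟩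
  · exact Or.inr (Or.inl ⟨h1, h2, by simp [good1, good2, h1, h2, payoffPD]⟩)
  · exact Or.inr (Or.inr ⟨h1, h2, by simp [good1, good2, h1, h2, payoffPD]⟩)
  · exfalso
    obtain ⟨s1,s2,s3,s4⟩ := hp
    push_neg at h1 h2
    rcases lt_or_ge p.2 (p.1+ε) with c1|c1
    · rcases lt_or_ge p.1 1 with c2|c2
      · rcases lt_or_ge p.1 (p.2+ε) with d1|d1
        · rcases lt_or_ge p.2 1 with d2|d2
          · linarith
          · have := h2 d1 d2; linarith
        · linarith
      · have h13 := h1 c1 c2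
        rcases lt_or_ge p.1 (p.2+ε) with d1|d1
        · rcases lt_or_ge p.2 1 with d2|d2
          · linarith
          · have := h2 d1 d2; linarith
        · linarith
    · rcases lt_or_ge p.1 (p.2+ε) with d1|d1
      · rcases lt_or_ge p.2 1 with d2|d2
        · linarith
        · have := h2 d1 d2; linarith
      · linarith

lemma cancel_pos {t B M : ℝ} (ht : 0 < t) (h : t * B ≤ t * M) : B ≤ M :=
  le_of_mul_le_mul_left h ht

/-- Punishment lemma: a bounded averaged sequence whose increments come from
values ≤ 1 whenever the average exceeds 2 has limsup at most 2. -/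
lemma punish (u : ℕ → ℝ)
    (hb : ∀ t, 1 ≤ t → 0 ≤ u t ∧ u t ≤ 3)
    (hrec : ∀ t, 1 ≤ t → ∃ c : ℝ, 0 ≤ c ∧ c ≤ 3 ∧ (2 < u t → c ≤ 1) ∧
      ((t:ℝ)+1) * u (t+1) = (t:ℝ) * u t + c) :
    limsup u atTop ≤ 2 := by
  -- infinitely often below 2
  have io2 : ∀ T : ℕ, 1 ≤ T → ∃ t, T ≤ t ∧ u t ≤ 2 := by
    intro T hT
    by_contra hcon
    push_neg at hcon
    have hall : ∀ t, T ≤ t → 2 < u t := fun t ht => hcon t ht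
    have mono : ∀ t, T ≤ t → (t:ℝ) * (u t - 1) ≤ (T:ℝ) * (u T - 1) := by
      intro t ht
      induction t, ht using Nat.le_induction with
      | base => exact le_rfl
      | succ n hn ih =>
        obtain ⟨c, hc0, hc3, hc1, hrecn⟩ := hrec n (le_trans hT hn)
        have hcle := hc1 (hall n hn)
        have : ((n:ℝ)+1) * (u (n+1) - 1) ≤ (n:ℝ) * (u n - 1) := by
          have : ((n:ℝ)+1) * u (n+1) - ((n:ℝ)+1) = (n:ℝ) * u n + c - ((n:ℝ)+1) := by
            linarith
          nlinarith [this]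
        push_cast
        linarith
    have hT0 : (0:ℝ) < (T:ℝ) := by exact_mod_cast hT
    have h3T : T ≤ 3*T := by omega
    have hm := mono (3*T) h3T
    have hu3 : 2 < u (3*T) := hall (3*T) h3T
    have huT : u T ≤ 3 := (hb T hT).2
    push_cast at hm
    nlinarith
  -- eventually below 2 + δ
  have ev : ∀ δ : ℝ, 0 < δ → ∀ᶠ t in atTop, u t ≤ 2 + δ := by
    intro δ hδ
    obtain ⟨N, hN⟩ := exists_nat_gt (1/δ)
    set T := max 1 N with hTdef
    have hT1 : 1 ≤ T := le_max_left _ _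
    obtain ⟨t₀, ht₀T, ht₀u⟩ := io2 T hT1
    have hδt : ∀ t : ℕ, t₀ ≤ t → 1 ≤ δ * ((t:ℝ)+1) := by
      intro t ht
      have h1 : (N:ℝ) ≤ (t:ℝ)+1 := by
        have : N ≤ t := le_trans (le_trans (le_max_right 1 N) ht₀T) ht
        have : (N:ℝ) ≤ (t:ℝ) := by exact_mod_cast this
        linarith
      have h2 : 1/δ < (t:ℝ)+1 := lt_of_lt_of_le hN h1
      rw [div_lt_iff₀ hδ] at h2
      nlinarith
    have key : ∀ t, t₀ ≤ t → u t ≤ 2 + δ := by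
      intro t ht
      induction t, ht using Nat.le_induction with
      | base => linarith
      | succ n hn ih =>
        have hn1 : 1 ≤ n := le_trans (le_trans hT1 ht₀T) hn
        obtain ⟨c, hc0, hc3, hc1, hrecn⟩ := hrec n hn1
        have hδn := hδt n hn
        have hpos : (0:ℝ) < (n:ℝ)+1 := by positivity
        rcases le_or_gt (u n) 2 with h|h
        · have : ((n:ℝ)+1) * u (n+1) ≤ ((n:ℝ)+1) * (2+δ) := by nlinarith
          exact cancel_pos hpos this
        · have hcle := hc1 h
          have : ((n:ℝ)+1) * u (n+1) ≤ ((n:ℝ)+1) * (2+δ) := by nlinarith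
          exact cancel_pos hpos this
    exact eventually_atTop.mpr ⟨t₀, key⟩
  -- conclude
  have hcb : IsCoboundedUnder (· ≤ ·) atTop u := by
    apply isCoboundedUnder_le_of_eventually_le (x := 0) atTop
    filter_upwards [eventually_atTop.mpr ⟨1, fun t ht => (hb t ht).1⟩] with t h using h
  have : ∀ δ : ℝ, 0 < δ → limsup u atTop ≤ 2 + δ := fun δ hδ =>
    limsup_le_of_le hcb (ev δ hδ)
  exact le_of_forall_pos_le_add this

lemma sep {ε η a b a' b' : ℝ} (hε : 0 < ε) (hη1 : 3*η ≤ ε) (hη2 : η ≤ 1/4) (hη0 : 0 < η)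
    (hda : |a' - a| ≤ η) (hdb : |b' - b| ≤ η)
    (hs1 : 2.5 ≤ a + b) (hs2 : a + b ≤ 3.5)
    (hA1 : b < a + ε) (hA2 : 1 ≤ a) (hA3 : b ≤ 2)
    (hA4 : b + ε ≤ a ∨ b < 1 ∨ 2 < a)
    (hB1 : a' < b' + ε) (hB2 : 1 ≤ b') (hB3 : a' ≤ 2)
    (hB4 : a' + ε ≤ b' ∨ a' < 1 ∨ 2 < b') : False := by
  rw [abs_le] at hda hdb
  obtain ⟨hda1, hda2⟩ := hda
  obtain ⟨hdb1, hdb2⟩ := hdb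
  rcases hA4 with h|h|h <;> rcases hB4 with g|g|g <;> linarith

/-- `AP ε u v t` : at time `t`, average `(u t, v t)` lies in the region where
the `u`-player cooperates and the `v`-player defects. -/
def AP (ε : ℝ) (u v : ℕ → ℝ) (t : ℕ) : Prop :=
  (v t < u t + ε ∧ 1 ≤ u t ∧ v t ≤ 2) ∧ (v t + ε ≤ u t ∨ v t < 1 ∨ 2 < u t)

lemma stayContraA (ε η : ℝ) (hε : 0 < ε) (hη1 : 3*η ≤ ε) (hη2 : η ≤ 1/4) (hη0 : 0 < η)
    (u v : ℕ → ℝ) (T : ℕ) (hT4 : 4 ≤ T)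
    (hsum : ∀ t, T ≤ t → 2.5 ≤ u t + v t ∧ u t + v t ≤ 3.5)
    (hbd : ∀ t, T ≤ t → 0 ≤ u t ∧ u t ≤ 3 ∧ 0 ≤ v t ∧ v t ≤ 3)
    (hstep : ∀ t, T ≤ t → |u (t+1) - u t| ≤ η ∧ |v (t+1) - v t| ≤ η)
    (hAB : ∀ t, T ≤ t → AP ε u v t ∨ AP ε v u t)
    (hrecA : ∀ t, T ≤ t → AP ε u v t →
      ((t:ℝ)+1) * (u (t+1) - v (t+1)) = (t:ℝ) * (u t - v t) - 3)
    (hstart : AP ε u v T) : False := by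
  have stay : ∀ t, T ≤ t → AP ε u v t := by
    intro t ht
    induction t, ht using Nat.le_induction with
    | base => exact hstart
    | succ n hn ih =>
      rcases hAB (n+1) (by omega) with h|h
      · exact h
      · exfalso
        obtain ⟨⟨hA1, hA2, hA3⟩, hA4⟩ := ih
        obtain ⟨⟨hB1, hB2, hB3⟩, hB4⟩ := h
        exact sep hε hη1 hη2 hη0 (hstep n hn).1 (hstep n hn).2 (hsum n hn).1 (hsum n hn).2
          hA1 hA2 hA3 hA4 hB1 hB2 hB3 hB4
  have zinv : ∀ t, T ≤ t →
      (t:ℝ) * (u t - v t) + 3*(t:ℝ) = (T:ℝ) * (u T - v T) + 3*(T:ℝ) := by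
    intro t ht
    induction t, ht using Nat.le_induction with
    | base => rfl
    | succ n hn ih =>
      have hr := hrecA n hn (stay n hn)
      push_cast
      linarith
  have dlow : ∀ t, T ≤ t → -1.5 ≤ u t - v t := by
    intro t ht
    have h1 := (stay t ht).1.2.2
    have h2 := (hsum t ht).1
    linarith
  set t := 4*T+1 with htdef
  have ht : T ≤ t := by omega
  have h1 := zinv t ht
  have h2 := dlow t ht
  have h3 : (0:ℝ) ≤ (t:ℝ) := by positivity
  have h4 : (t:ℝ) * (-1.5) ≤ (t:ℝ) * (u t - v t) := mul_le_mul_of_nonneg_left h2 h3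
  have h5 : u T - v T ≤ 3 := by
    have h6 := hbd T le_rfl
    linarith [h6.1, h6.2.1, h6.2.2.1, h6.2.2.2]
  have hT4' : (4:ℝ) ≤ (T:ℝ) := by exact_mod_cast hT4
  have htr : (t:ℝ) = 4*(T:ℝ)+1 := by rw [htdef]; push_cast; ring
  have h6 : (T:ℝ) * (u T - v T) ≤ (T:ℝ) * 3 :=
    mul_le_mul_of_nonneg_left h5 (by linarith)
  rw [htr] at h1 h4
  nlinarith

lemma window {t S C : ℝ} (ht : 4 ≤ t) (h : t*(S-3) = C) (hC1 : -1 ≤ C) (hC2 : C ≤ 1) :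
    2.5 ≤ S ∧ S ≤ 3.5 := by
  constructor <;> nlinarith

lemma Khelp1 {n A B : ℝ} (hn : 1 ≤ n) (e : (n+1)*(B-2) = n*(A-2)) (hA : 1 ≤ A) :
    1 ≤ B := by
  nlinarith [mul_nonneg (by linarith : (0:ℝ) ≤ n) (by linarith : (0:ℝ) ≤ A - 1)]

lemma Khelp2 {n A B : ℝ} (hn : 1 ≤ n) (e : (n+1)*(B-2) = n*(A-2)) (hA : A ≤ 2) :
    B ≤ 2 := by
  nlinarith [mul_nonneg (by linarith : (0:ℝ) ≤ n) (by linarith : (0:ℝ) ≤ 2 - A)]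

lemma Khelp3 {ε n A B A' B' : ℝ} (hn : 1 ≤ n) (hε : 0 < ε)
    (e1 : (n+1)*(A'-2) = n*(A-2)) (e2 : (n+1)*(B'-2) = n*(B-2)) (h : B < A + ε) :
    B' < A' + ε := by
  nlinarith [mul_lt_mul_of_pos_left h (by linarith : (0:ℝ) < n)]

lemma Kcase {ε : ℝ} (hε : 0 < ε) {x : ℕ → Pt}
    (hx : IsTrajPD (fun p => payoffPD (good1 ε p) (good2 ε p)) x)
    {t₀ : ℕ} (ht₀ : 1 ≤ t₀)
    (hK1 : (x t₀).2 < (x t₀).1 + ε ∧ 1 ≤ (x t₀).1 ∧ (x t₀).2 ≤ 2)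
    (hK2 : (x t₀).1 < (x t₀).2 + ε ∧ 1 ≤ (x t₀).2 ∧ (x t₀).1 ≤ 2) :
    Tendsto (fun t => (x t).1) atTop (𝓝 2) ∧ Tendsto (fun t => (x t).2) atTop (𝓝 2) := by
  have claim : ∀ t, t₀ ≤ t →
      (((x t).2 < (x t).1 + ε ∧ 1 ≤ (x t).1 ∧ (x t).2 ≤ 2) ∧
       ((x t).1 < (x t).2 + ε ∧ 1 ≤ (x t).2 ∧ (x t).1 ≤ 2)) ∧
      (t:ℝ)*((x t).1 - 2) = (t₀:ℝ)*((x t₀).1 - 2) ∧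
      (t:ℝ)*((x t).2 - 2) = (t₀:ℝ)*((x t₀).2 - 2) := by
    intro t ht
    induction t, ht using Nat.le_induction with
    | base => exact ⟨⟨hK1, hK2⟩, rfl, rfl⟩
    | succ n hn ih =>
      obtain ⟨⟨k1, k2⟩, f1, f2⟩ := ih
      have hn1 : 1 ≤ n := le_trans ht₀ hn
      have hn1' : (1:ℝ) ≤ (n:ℝ) := by exact_mod_cast hn1
      have hg1 : good1 ε (x n) = true := by simp only [good1]; rw [if_pos k1]
      have hg2 : good2 ε (x n) = true := by simp only [good2]; rw [if_pos k2]
      obtain ⟨e1, e2⟩ := traj_rec hx hn1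
      simp only [hg1, hg2] at e1 e2
      norm_num [payoffPD] at e1 e2
      have e1' : ((n:ℝ)+1)*((x (n+1)).1 - 2) = (n:ℝ)*((x n).1 - 2) := by linarith
      have e2' : ((n:ℝ)+1)*((x (n+1)).2 - 2) = (n:ℝ)*((x n).2 - 2) := by linarith
      have hc1 : (1:ℝ) ≤ (n:ℝ) := hn1'
      refine ⟨⟨⟨?_, ?_, ?_⟩, ?_, ?_, ?_⟩, ?_, ?_⟩
      · exact Khelp3 hc1 hε e1' e2' k1.1
      · exact Khelp1 hc1 e1' k1.2.1
      · exact Khelp2 hc1 e2' k1.2.2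
      · exact Khelp3 hc1 hε e2' e1' k2.1
      · exact Khelp1 hc1 e2' k2.2.1
      · exact Khelp2 hc1 e1' k2.2.2
      · push_cast
        push_cast at f1
        linarith
      · push_cast
        push_cast at f2
        linarith
  constructor
  · set c₁ := (t₀:ℝ)*((x t₀).1 - 2) with hc₁
    have hlim : Tendsto (fun t:ℕ => 2 + c₁/(t:ℝ)) atTop (𝓝 2) := by
      have h0 := tendsto_const_div_atTop_nhds_zero_nat c₁
      have := (tendsto_const_nhds (x := (2:ℝ)) (f := atTop (α := ℕ))).add h0
      simpa using this
    apply hlim.congr'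
    filter_upwards [eventually_ge_atTop (max t₀ 1)] with t ht
    have ht₀' : t₀ ≤ t := le_trans (le_max_left _ _) ht
    have ht1 : 1 ≤ t := le_trans (le_max_right _ _) ht
    have htR : ((t:ℝ)) ≠ 0 := by
      have : (1:ℝ) ≤ (t:ℝ) := by exact_mod_cast ht1
      linarith
    have hf := (claim t ht₀').2.1
    have : c₁/(t:ℝ) = (x t).1 - 2 := by
      rw [div_eq_iff htR]; linarith
    linarith
  · set c₂ := (t₀:ℝ)*((x t₀).2 - 2) with hc₂
    have hlim : Tendsto (fun t:ℕ => 2 + c₂/(t:ℝ)) atTop (𝓝 2) := by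
      have h0 := tendsto_const_div_atTop_nhds_zero_nat c₂
      have := (tendsto_const_nhds (x := (2:ℝ)) (f := atTop (α := ℕ))).add h0
      simpa using this
    apply hlim.congr'
    filter_upwards [eventually_ge_atTop (max t₀ 1)] with t ht
    have ht₀' : t₀ ≤ t := le_trans (le_max_left _ _) ht
    have ht1 : 1 ≤ t := le_trans (le_max_right _ _) ht
    have htR : ((t:ℝ)) ≠ 0 := by
      have : (1:ℝ) ≤ (t:ℝ) := by exact_mod_cast ht1
      linarith
    have hf := (claim t ht₀').2.2
    have : c₂/(t:ℝ) = (x t).2 - 2 := by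
      rw [div_eq_iff htR]; linarith
    linarith

end SmaleAux

open SmaleAux

/-- With the payoff of player i in the repeated game defined as the limsup of the
i-th coordinates of the average payoffs, the profile of good strategies
(good1 ε, good2 ε) is a Nash equilibrium in memory strategies: from every initial
point it gives both players payoff 2, while any unilateral deviation yields the
deviator a payoff of at most 2. -/
theorem stmt2 (ε : ℝ) (hε : 0 < ε) :
    (∀ x : ℕ → Pt, IsTrajPD (fun p => payoffPD (good1 ε p) (good2 ε p)) x →
      limsup (fun t => (x t).1) atTop = 2 ∧ limsup (fun t => (x t).2) atTop = 2) ∧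
    (∀ s₂ : Pt → Bool, ∀ x : ℕ → Pt,
      IsTrajPD (fun p => payoffPD (good1 ε p) (s₂ p)) x →
      limsup (fun t => (x t).2) atTop ≤ 2) ∧
    (∀ s₁ : Pt → Bool, ∀ x : ℕ → Pt,
      IsTrajPD (fun p => payoffPD (s₁ p) (good2 ε p)) x →
      limsup (fun t => (x t).1) atTop ≤ 2) := by
  refine ⟨?_, ?_, ?_⟩
  · -- equilibrium path
    intro x hx
    have hS : ∀ t, 1 ≤ t → inS (x t) :=
      traj_inS hx (fun p => payoff_inS _ _)
    have hxrec : ∀ t : ℕ, 1 ≤ t →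
        ((t:ℝ)+1) * (x (t+1)).1 = (t:ℝ) * (x t).1 + (payoffPD (good1 ε (x t)) (good2 ε (x t))).1 ∧
        ((t:ℝ)+1) * (x (t+1)).2 = (t:ℝ) * (x t).2 + (payoffPD (good1 ε (x t)) (good2 ε (x t))).2 :=
      fun t ht => traj_rec hx ht
    by_cases hK : ∃ t₀, 1 ≤ t₀ ∧
        ((x t₀).2 < (x t₀).1 + ε ∧ 1 ≤ (x t₀).1 ∧ (x t₀).2 ≤ 2) ∧
        ((x t₀).1 < (x t₀).2 + ε ∧ 1 ≤ (x t₀).2 ∧ (x t₀).1 ≤ 2)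
    · obtain ⟨t₀, ht₀, hK1, hK2⟩ := hK
      obtain ⟨T1, T2⟩ := Kcase hε hx ht₀ hK1 hK2
      exact ⟨T1.limsup_eq, T2.limsup_eq⟩
    · exfalso
      set u : ℕ → ℝ := fun t => (x t).1 with hu
      set v : ℕ → ℝ := fun t => (x t).2 with hv
      set η : ℝ := min (ε/3) (1/4) with hηdef
      have hη0 : 0 < η := lt_min (by positivity) (by norm_num)
      have hη1 : 3*η ≤ ε := by
        have := min_le_left (ε/3) (1/4); rw [hηdef]; linarith
      have hη2 : η ≤ 1/4 := min_le_right _ _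
      obtain ⟨N, hN⟩ := exists_nat_gt (3/η)
      set T := N + 4 with hTdef
      have hT4 : 4 ≤ T := by omega
      have hT1 : 1 ≤ T := by omega
      have hTη : ∀ t : ℕ, T ≤ t → 3 ≤ η * ((t:ℝ)+1) := by
        intro t ht
        have h1 : (N:ℝ) ≤ (t:ℝ) := by exact_mod_cast le_trans (by omega : N ≤ T) ht
        have h2 : 3/η < (t:ℝ)+1 := by linarith
        rw [div_lt_iff₀ hη0] at h2
        nlinarith
      -- the payoff value and region at each time
      have hABf : ∀ t, 1 ≤ t →
          (AP ε u v t ∧ payoffPD (good1 ε (x t)) (good2 ε (x t)) = (0,3)) ∨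
          (AP ε v u t ∧ payoffPD (good1 ε (x t)) (good2 ε (x t)) = (3,0)) := by
        intro t ht
        rcases tri hε (hS t ht) with ⟨c1,c2,_⟩|⟨c1,c2,hfeq⟩|⟨c1,c2,hfeq⟩
        · exact absurd ⟨t, ht, c1, c2⟩ hK
        · left
          refine ⟨⟨c1, ?_⟩, hfeq⟩
          by_contra hc
          push_neg at hc
          exact c2 ⟨by linarith [hc.1], hc.2.1, hc.2.2⟩
        · right
          refine ⟨⟨c2, ?_⟩, hfeq⟩
          by_contra hc
          push_neg at hc
          exact c1 ⟨by linarith [hc.1], hc.2.1, hc.2.2⟩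
      -- the sum invariant
      have hsum3 : ∀ t, 1 ≤ t →
          (payoffPD (good1 ε (x t)) (good2 ε (x t))).1 +
          (payoffPD (good1 ε (x t)) (good2 ε (x t))).2 = 3 := by
        intro t ht
        rcases hABf t ht with ⟨_, hfeq⟩|⟨_, hfeq⟩ <;> rw [hfeq] <;> norm_num
      have hSval : ∀ t : ℕ, 1 ≤ t →
          (t:ℝ)*((x t).1 + (x t).2 - 3) = ((x 1).1 + (x 1).2 - 3) := by
        intro t ht
        induction t, ht using Nat.le_induction with
        | base => push_cast; ring
        | succ n hn ih =>
          obtain ⟨e1, e2⟩ := hxrec n hn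
          have h3 := hsum3 n hn
          push_cast
          push_cast at ih
          linarith
      have hC : -1 ≤ ((x 1).1 + (x 1).2 - 3) ∧ ((x 1).1 + (x 1).2 - 3) ≤ 1 := by
        obtain ⟨a1, a2, a3, a4⟩ := hS 1 le_rfl
        constructor <;> linarith
      have hwin : ∀ t, T ≤ t → 2.5 ≤ u t + v t ∧ u t + v t ≤ 3.5 := by
        intro t ht
        have ht1 : 1 ≤ t := le_trans hT1 ht
        have ht4 : (4:ℝ) ≤ (t:ℝ) := by exact_mod_cast le_trans hT4 ht
        exact window ht4 (hSval t ht1) hC.1 hC.2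
      have hbd : ∀ t, T ≤ t → 0 ≤ u t ∧ u t ≤ 3 ∧ 0 ≤ v t ∧ v t ≤ 3 := by
        intro t ht
        exact inS_bounds (hS t (le_trans hT1 ht))
      have hstep : ∀ t, T ≤ t → |u (t+1) - u t| ≤ η ∧ |v (t+1) - v t| ≤ η := by
        intro t ht
        have ht1 : 1 ≤ t := le_trans hT1 ht
        obtain ⟨e1, e2⟩ := hxrec t ht1
        obtain ⟨a1, a2, a3, a4⟩ := hS t ht1
        obtain ⟨b1, b2, b3, b4⟩ := inS_bounds (payoff_inS (good1 ε (x t)) (good2 ε (x t)))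
        obtain ⟨a1', a2', a3', a4'⟩ := inS_bounds ⟨a1, a2, a3, a4⟩
        have hpos : (0:ℝ) < (t:ℝ)+1 := by positivity
        have hTt := hTη t ht
        constructor
        · have he : (u (t+1) - u t) * ((t:ℝ)+1) =
              (payoffPD (good1 ε (x t)) (good2 ε (x t))).1 - (x t).1 := by
            simp only [hu]; linear_combination e1
          have habs : |u (t+1) - u t| * ((t:ℝ)+1) ≤ η * ((t:ℝ)+1) := by
            rw [← abs_of_pos hpos, ← abs_mul, he]
            rw [abs_of_pos hpos] at *
            calc |(payoffPD (good1 ε (x t)) (good2 ε (x t))).1 - (x t).1| ≤ 3 := by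
                  rw [abs_le]; constructor <;> linarith
              _ ≤ η * ((t:ℝ)+1) := hTt
          exact le_of_mul_le_mul_right habs hpos
        · have he : (v (t+1) - v t) * ((t:ℝ)+1) =
              (payoffPD (good1 ε (x t)) (good2 ε (x t))).2 - (x t).2 := by
            simp only [hv]; linear_combination e2
          have habs : |v (t+1) - v t| * ((t:ℝ)+1) ≤ η * ((t:ℝ)+1) := by
            rw [← abs_of_pos hpos, ← abs_mul, he]
            rw [abs_of_pos hpos] at *
            calc |(payoffPD (good1 ε (x t)) (good2 ε (x t))).2 - (x t).2| ≤ 3 := by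
                  rw [abs_le]; constructor <;> linarith
              _ ≤ η * ((t:ℝ)+1) := hTt
          exact le_of_mul_le_mul_right habs hpos
      have hAB : ∀ t, T ≤ t → AP ε u v t ∨ AP ε v u t := by
        intro t ht
        rcases hABf t (le_trans hT1 ht) with ⟨h, _⟩|⟨h, _⟩
        · exact Or.inl h
        · exact Or.inr h
      have hrecA : ∀ t, T ≤ t → AP ε u v t →
          ((t:ℝ)+1) * (u (t+1) - v (t+1)) = (t:ℝ) * (u t - v t) - 3 := by
        intro t ht hap
        have ht1 : 1 ≤ t := le_trans hT1 ht
        obtain ⟨e1, e2⟩ := hxrec t ht1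
        rcases hABf t ht1 with ⟨_, hfeq⟩|⟨hap', hfeq⟩
        · rw [hfeq] at e1 e2
          norm_num at e1 e2
          rw [hu, hv]
          linarith
        · exfalso
          obtain ⟨⟨p1, p2, p3⟩, p4⟩ := hap
          obtain ⟨⟨q1, q2, q3⟩, q4⟩ := hap'
          rcases p4 with h|h|h <;> linarith
      have hrecB : ∀ t, T ≤ t → AP ε v u t →
          ((t:ℝ)+1) * (v (t+1) - u (t+1)) = (t:ℝ) * (v t - u t) - 3 := by
        intro t ht hap
        have ht1 : 1 ≤ t := le_trans hT1 ht
        obtain ⟨e1, e2⟩ := hxrec t ht1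
        rcases hABf t ht1 with ⟨hap', hfeq⟩|⟨_, hfeq⟩
        · exfalso
          obtain ⟨⟨p1, p2, p3⟩, p4⟩ := hap
          obtain ⟨⟨q1, q2, q3⟩, q4⟩ := hap'
          rcases p4 with h|h|h <;> linarith
        · rw [hfeq] at e1 e2
          norm_num at e1 e2
          rw [hu, hv]
          linarith
      rcases hAB T le_rfl with h|h
      · exact stayContraA ε η hε hη1 hη2 hη0 u v T hT4 hwin hbd hstep hAB hrecA h
      · refine stayContraA ε η hε hη1 hη2 hη0 v u T hT4 ?_ ?_ ?_
          (fun t ht => (hAB t ht).symm) hrecB h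
        · intro t ht
          obtain ⟨w1, w2⟩ := hwin t ht
          exact ⟨by linarith, by linarith⟩
        · intro t ht
          obtain ⟨w1, w2, w3, w4⟩ := hbd t ht
          exact ⟨w3, w4, w1, w2⟩
        · intro t ht
          exact ⟨(hstep t ht).2, (hstep t ht).1⟩
  · -- deviation of player 2
    intro s₂ x hx
    have hS : ∀ t, 1 ≤ t → inS (x t) :=
      traj_inS hx (fun p => payoff_inS _ _)
    apply punish
    · intro t ht
      have h := inS_bounds (hS t ht)
      exact ⟨h.2.2.1, h.2.2.2⟩
    · intro t ht
      refine ⟨(payoffPD (good1 ε (x t)) (s₂ (x t))).2, ?_, ?_, ?_, (traj_rec hx ht).2⟩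
      · exact (inS_bounds (payoff_inS (good1 ε (x t)) (s₂ (x t)))).2.2.1
      · exact (inS_bounds (payoff_inS (good1 ε (x t)) (s₂ (x t)))).2.2.2
      · intro h2
        have hg : good1 ε (x t) = false := by
          simp only [good1]
          rw [if_neg]
          rintro ⟨-, -, hc⟩
          linarith
        rw [hg]
        cases s₂ (x t) <;> norm_num [payoffPD]
  · -- deviation of player 1
    intro s₁ x hx
    have hS : ∀ t, 1 ≤ t → inS (x t) :=
      traj_inS hx (fun p => payoff_inS _ _)
    apply punish
    · intro t ht
      have h := inS_bounds (hS t ht)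
      exact ⟨h.1, h.2.1⟩
    · intro t ht
      refine ⟨(payoffPD (s₁ (x t)) (good2 ε (x t))).1, ?_, ?_, ?_, (traj_rec hx ht).1⟩
      · exact (inS_bounds (payoff_inS (s₁ (x t)) (good2 ε (x t)))).1
      · exact (inS_bounds (payoff_inS (s₁ (x t)) (good2 ε (x t)))).2.1
      · intro h2
        have hg : good2 ε (x t) = false := by
          simp only [good2]
          rw [if_neg]
          rintro ⟨-, -, hc⟩
          linarith
        rw [hg]
        cases s₁ (x t) <;> norm_num [payoffPD]
end

section
/- Suppose player 1 plays the good strategy s₁* (with parameter ε > 0) and player 2 plays an arbitrary memory strategy s₂. Then for every initial point x̄₁ ∈ 𝔖 and every Banach limit Λ, the trajectory (x̄_t)_{t≥1} = ((x̄¹_t, x̄²_t))_{t≥1} of the dynamical system induced by (s₁*, s₂) satisfies Λ((x̄²_t)_t) ≤ Λ((x̄¹_t)_t) + ε. -/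
open Filter

/-- A bounded real sequence. -/
def BddSeq (a : ℕ → ℝ) : Prop := ∃ M : ℝ, ∀ n, |a n| ≤ M

/-- A Banach limit: a linear functional on the space of bounded real sequences which
is positive, shift-invariant, and sends the constant sequence 1 to 1. -/
structure BanachLimit where
  /-- the underlying functional (its values only matter on bounded sequences) -/
  Λ : (ℕ → ℝ) → ℝ
  map_add : ∀ a b : ℕ → ℝ, BddSeq a → BddSeq b → Λ (a + b) = Λ a + Λ b
  map_smul : ∀ (c : ℝ) (a : ℕ → ℝ), BddSeq a → Λ (c • a) = c * Λ a
  pos : ∀ a : ℕ → ℝ, BddSeq a → (∀ n, 0 ≤ a n) → 0 ≤ Λ a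
  shift_inv : ∀ a : ℕ → ℝ, BddSeq a → Λ (fun n => a (n + 1)) = Λ a
  map_one : Λ (fun _ => 1) = 1

-- small facts
lemma payoff_bounds (a b : Bool) : 0 ≤ (payoffPD a b).1 ∧ (payoffPD a b).1 ≤ 3 ∧
    0 ≤ (payoffPD a b).2 ∧ (payoffPD a b).2 ≤ 3 := by
  cases a <;> cases b <;> norm_num [payoffPD]

lemma payoff_diff_le (a b : Bool) : (payoffPD a b).2 - (payoffPD a b).1 ≤ 3 := by
  cases a <;> cases b <;> norm_num [payoffPD]

lemma payoff_diff_D (b : Bool) : (payoffPD false b).2 - (payoffPD false b).1 ≤ 0 := by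
  cases b <;> norm_num [payoffPD]

lemma good1_true {ε : ℝ} {p : Pt} (hp : good1 ε p = true) : p.2 < p.1 + ε := by
  unfold good1 at hp
  split at hp
  · next h => exact h.1
  · simp at hp

lemma SPD_bounds {p : Pt} (hp : p ∈ SPD) :
    0 ≤ p.1 ∧ p.1 ≤ 3 ∧ 0 ≤ p.2 ∧ p.2 ≤ 3 := by
  have hsub : SPD ⊆ Set.Icc (0:ℝ) 3 ×ˢ Set.Icc (0:ℝ) 3 := by
    apply convexHull_min _ ((convex_Icc _ _).prod (convex_Icc _ _))
    intro q hq
    simp only [Set.mem_insert_iff, Set.mem_singleton_iff] at hq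
    rcases hq with rfl|rfl|rfl|rfl <;>
      exact Set.mem_prod.2 ⟨by norm_num [Set.mem_Icc], by norm_num [Set.mem_Icc]⟩
  obtain ⟨⟨h1,h2⟩,⟨h3,h4⟩⟩ := hsub hp
  exact ⟨h1,h2,h3,h4⟩

section Main
variable (ε : ℝ) (s₂ : Pt → Bool) (x : ℕ → Pt)

lemma coord_rec
    (hrec : ∀ t : ℕ, 1 ≤ t → x (t + 1) =
      ((t : ℝ) + 1)⁻¹ • ((t : ℝ) • x t + payoffPD (good1 ε (x t)) (s₂ (x t))))
    (t : ℕ) (ht : 1 ≤ t) :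
    (x (t+1)).1 = ((t:ℝ)+1)⁻¹ * ((t:ℝ) * (x t).1 + (payoffPD (good1 ε (x t)) (s₂ (x t))).1) ∧
    (x (t+1)).2 = ((t:ℝ)+1)⁻¹ * ((t:ℝ) * (x t).2 + (payoffPD (good1 ε (x t)) (s₂ (x t))).2) := by
  rw [hrec t ht]
  constructor <;> simp [Prod.smul_fst, Prod.smul_snd, Prod.fst_add, Prod.snd_add, smul_eq_mul] <;> ring

lemma box_bounds
    (hx1 : x 1 ∈ SPD)
    (hrec : ∀ t : ℕ, 1 ≤ t → x (t + 1) =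
      ((t : ℝ) + 1)⁻¹ • ((t : ℝ) • x t + payoffPD (good1 ε (x t)) (s₂ (x t)))) :
    ∀ t, 1 ≤ t → 0 ≤ (x t).1 ∧ (x t).1 ≤ 3 ∧ 0 ≤ (x t).2 ∧ (x t).2 ≤ 3 := by
  intro t ht
  induction t with
  | zero => omega
  | succ k ih =>
    rcases Nat.lt_or_ge k 1 with h1 | hk
    · have : k = 0 := by omega
      subst this
      exact SPD_bounds hx1
    · obtain ⟨a0, a3, b0, b3⟩ := ih hk
      obtain ⟨c0, c3, d0, d3⟩ := payoff_bounds (good1 ε (x k)) (s₂ (x k))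
      obtain ⟨h1', h2'⟩ := coord_rec ε s₂ x hrec k hk
      have hT : (0:ℝ) < (k:ℝ) + 1 := by positivity
      have hTinv : (0:ℝ) < ((k:ℝ)+1)⁻¹ := by positivity
      have hid : ((k:ℝ)+1)⁻¹ * ((k:ℝ)+1) = 1 := inv_mul_cancel₀ hT.ne'
      have hk0 : (0:ℝ) ≤ (k:ℝ) := Nat.cast_nonneg k
      refine ⟨?_, ?_, ?_, ?_⟩
      · rw [h1']; exact mul_nonneg hTinv.le (by nlinarith [mul_nonneg hk0 a0])
      · rw [h1']
        have hle : (k:ℝ)*(x k).1 + (payoffPD (good1 ε (x k)) (s₂ (x k))).1 ≤ 3*((k:ℝ)+1) := by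
          nlinarith
        nlinarith [mul_le_mul_of_nonneg_left hle hTinv.le]
      · rw [h2']; exact mul_nonneg hTinv.le (by nlinarith [mul_nonneg hk0 b0])
      · rw [h2']
        have hle : (k:ℝ)*(x k).2 + (payoffPD (good1 ε (x k)) (s₂ (x k))).2 ≤ 3*((k:ℝ)+1) := by
          nlinarith
        nlinarith [mul_le_mul_of_nonneg_left hle hTinv.le]

lemma key_bound (hε : 0 < ε)
    (hrec : ∀ t : ℕ, 1 ≤ t → x (t + 1) =
      ((t : ℝ) + 1)⁻¹ • ((t : ℝ) • x t + payoffPD (good1 ε (x t)) (s₂ (x t)))) :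
    ∀ t : ℕ, 1 ≤ t → (t:ℝ) * max ((x t).2 - (x t).1 - ε) 0 ≤
      max (max ((x 1).2 - (x 1).1 - ε) 0) 3 := by
  set C : ℝ := max (max ((x 1).2 - (x 1).1 - ε) 0) 3 with hC
  have hC3 : (3:ℝ) ≤ C := le_max_right _ _
  have hC0 : (0:ℝ) ≤ C := by linarith
  intro t ht
  induction t with
  | zero => omega
  | succ k ih =>
    rcases Nat.lt_or_ge k 1 with h1 | hk
    · have : k = 0 := by omega
      subst this
      have h0 : max ((x 1).2 - (x 1).1 - ε) 0 ≤ C := le_max_left _ _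
      simpa using h0
    · have hke := ih hk
      have hT : (0:ℝ) < (k:ℝ) + 1 := by positivity
      have hk0 : (0:ℝ) ≤ (k:ℝ) := Nat.cast_nonneg k
      obtain ⟨h1', h2'⟩ := coord_rec ε s₂ x hrec k hk
      have hdrec : ((k:ℝ)+1) * ((x (k+1)).2 - (x (k+1)).1) =
          (k:ℝ) * ((x k).2 - (x k).1) +
          ((payoffPD (good1 ε (x k)) (s₂ (x k))).2 - (payoffPD (good1 ε (x k)) (s₂ (x k))).1) := by
        rw [h1', h2']
        field_simp
        ring
      have hbound : ((k:ℝ)+1) * ((x (k+1)).2 - (x (k+1)).1 - ε) ≤ C := by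
        have expand : ((k:ℝ)+1) * ((x (k+1)).2 - (x (k+1)).1 - ε) =
            (k:ℝ) * ((x k).2 - (x k).1 - ε) +
            ((payoffPD (good1 ε (x k)) (s₂ (x k))).2 - (payoffPD (good1 ε (x k)) (s₂ (x k))).1) - ε := by
          rw [mul_sub, hdrec]; ring
        cases hgb : good1 ε (x k) with
        | true =>
          have hlt : (x k).2 - (x k).1 - ε < 0 := by
            have := good1_true hgb; linarith
          have hδ : (payoffPD (good1 ε (x k)) (s₂ (x k))).2 -
              (payoffPD (good1 ε (x k)) (s₂ (x k))).1 ≤ 3 := payoff_diff_le _ _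
          nlinarith
        | false =>
          have hδ : (payoffPD (good1 ε (x k)) (s₂ (x k))).2 -
              (payoffPD (good1 ε (x k)) (s₂ (x k))).1 ≤ 0 := by
            rw [hgb]; exact payoff_diff_D _
          have hme : (k:ℝ) * ((x k).2 - (x k).1 - ε) ≤
              (k:ℝ) * max ((x k).2 - (x k).1 - ε) 0 :=
            mul_le_mul_of_nonneg_left (le_max_left _ _) hk0
          nlinarith
      have heq : ((k:ℝ)+1) * max ((x (k+1)).2 - (x (k+1)).1 - ε) 0 =
          max (((k:ℝ)+1) * ((x (k+1)).2 - (x (k+1)).1 - ε)) 0 := by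
        rw [mul_max_of_nonneg _ _ hT.le, mul_zero]
      rw [Nat.cast_add, Nat.cast_one, heq]
      exact max_le hbound hC0

end Main

lemma bddseq_const (c : ℝ) : BddSeq (fun _ => c) := ⟨|c|, fun _ => le_rfl⟩

lemma bddseq_sub {a b : ℕ → ℝ} (ha : BddSeq a) (hb : BddSeq b) :
    BddSeq (fun n => a n - b n) := by
  obtain ⟨M, hM⟩ := ha; obtain ⟨N, hN⟩ := hb
  exact ⟨M + N, fun n => (abs_sub _ _).trans (add_le_add (hM n) (hN n))⟩

lemma bddseq_add {a b : ℕ → ℝ} (ha : BddSeq a) (hb : BddSeq b) :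
    BddSeq (fun n => a n + b n) := by
  obtain ⟨M, hM⟩ := ha; obtain ⟨N, hN⟩ := hb
  exact ⟨M + N, fun n => (abs_add_le _ _).trans (add_le_add (hM n) (hN n))⟩

lemma banach_map_const (L : BanachLimit) (c : ℝ) : L.Λ (fun _ => c) = c := by
  have h : (fun _ : ℕ => c) = c • (fun _ : ℕ => (1 : ℝ)) := by
    funext n; simp
  rw [h, L.map_smul c _ (bddseq_const 1), L.map_one, mul_one]

lemma banach_mono (L : BanachLimit) {a b : ℕ → ℝ} (ha : BddSeq a) (hb : BddSeq b)
    (h : ∀ n, a n ≤ b n) : L.Λ a ≤ L.Λ b := by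
  have hc : BddSeq (fun n => b n - a n) := bddseq_sub hb ha
  have hpos : 0 ≤ L.Λ (fun n => b n - a n) :=
    L.pos _ hc (fun n => sub_nonneg.2 (h n))
  have hb' : b = a + fun n => b n - a n := by funext n; simp
  have hadd := L.map_add a (fun n => b n - a n) ha hc
  rw [← hb'] at hadd
  linarith

lemma banach_shiftn (L : BanachLimit) (a : ℕ → ℝ) (ha : BddSeq a) (n : ℕ) :
    L.Λ (fun m => a (m + n)) = L.Λ a := by
  induction n with
  | zero => simp
  | succ k ih =>
    have hb : BddSeq (fun m => a (m + k)) := by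
      obtain ⟨M, hM⟩ := ha; exact ⟨M, fun m => hM _⟩
    have h := L.shift_inv (fun m => a (m + k)) hb
    have he : (fun m => a (m + (k + 1))) = fun m => a (m + 1 + k) := by
      funext m; ring_nf
    rw [he, h, ih]


/-- If player 1 plays the good strategy (with parameter ε) and player 2 plays an arbitrary
memory strategy, then for every Banach limit Λ and every trajectory of average
payoffs from any initial point in 𝔖, Λ(x̄²) ≤ Λ(x̄¹) + ε. -/
theorem stmt3 (ε : ℝ) (hε : 0 < ε) (s₂ : Pt → Bool) (x : ℕ → Pt)
    (hx : IsTrajPD (fun p => payoffPD (good1 ε p) (s₂ p)) x)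
    (L : BanachLimit) :
    L.Λ (fun t => (x t).2) ≤ L.Λ (fun t => (x t).1) + ε := by
  obtain ⟨hx1, hrec⟩ := hx
  have hrec' : ∀ t : ℕ, 1 ≤ t → x (t + 1) =
      ((t : ℝ) + 1)⁻¹ • ((t : ℝ) • x t + payoffPD (good1 ε (x t)) (s₂ (x t))) := hrec
  have hbox := box_bounds ε s₂ x hx1 hrec'
  have hkey := key_bound ε s₂ x hε hrec'
  -- abbreviations (not `set`, to keep syntactic control)
  have hC3 : (3:ℝ) ≤ max (max ((x 1).2 - (x 1).1 - ε) 0) 3 := le_max_right _ _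
  have hC0 : (0:ℝ) ≤ max (max ((x 1).2 - (x 1).1 - ε) 0) 3 := by linarith
  -- boundedness of the coordinate sequences
  have hbd1 : BddSeq (fun t => (x t).1) := by
    refine ⟨max 3 |(x 0).1|, fun n => ?_⟩
    cases n with
    | zero => exact le_max_right _ _
    | succ k =>
      obtain ⟨a0, a3, _, _⟩ := hbox (k+1) (by omega)
      exact (abs_le.2 ⟨by linarith, a3⟩).trans (le_max_left _ _)
  have hbd2 : BddSeq (fun t => (x t).2) := by
    refine ⟨max 3 |(x 0).2|, fun n => ?_⟩
    cases n with
    | zero => exact le_max_right _ _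
    | succ k =>
      obtain ⟨_, _, b0, b3⟩ := hbox (k+1) (by omega)
      exact (abs_le.2 ⟨by linarith, b3⟩).trans (le_max_left _ _)
  have hbdd : BddSeq (fun t => (x t).2 - (x t).1) := bddseq_sub hbd2 hbd1
  have hbde : BddSeq (fun t => max ((x t).2 - (x t).1 - ε) 0) := by
    obtain ⟨M, hM⟩ := hbdd
    refine ⟨M, fun n => ?_⟩
    have h1 : (x n).2 - (x n).1 - ε ≤ M := by
      have h' : (x n).2 - (x n).1 ≤ M := (abs_le.1 (hM n)).2
      linarith
    have h2 : (0:ℝ) ≤ M := le_trans (abs_nonneg _) (hM n)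
    rw [abs_of_nonneg (le_max_right _ _)]
    exact max_le h1 h2
  -- Λ of e is ≤ C/n for every n ≥ 1
  have heC : ∀ n : ℕ, 1 ≤ n →
      L.Λ (fun t => max ((x t).2 - (x t).1 - ε) 0) ≤
        (max (max ((x 1).2 - (x 1).1 - ε) 0) 3) / n := by
    intro n hn
    have hn0 : (0:ℝ) < (n:ℝ) := by exact_mod_cast hn
    have hshift : BddSeq (fun m => max ((x (m+n)).2 - (x (m+n)).1 - ε) 0) := by
      obtain ⟨M, hM⟩ := hbde; exact ⟨M, fun m => hM _⟩
    have hpt : ∀ m : ℕ, max ((x (m+n)).2 - (x (m+n)).1 - ε) 0 ≤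
        (max (max ((x 1).2 - (x 1).1 - ε) 0) 3) / n := by
      intro m
      have hmn : 1 ≤ m + n := by omega
      have hk := hkey (m+n) hmn
      have hcast : (n:ℝ) ≤ ((m+n : ℕ):ℝ) := by exact_mod_cast Nat.le_add_left n m
      have hemax : (0:ℝ) ≤ max ((x (m+n)).2 - (x (m+n)).1 - ε) 0 := le_max_right _ _
      rw [le_div_iff₀ hn0]
      calc max ((x (m+n)).2 - (x (m+n)).1 - ε) 0 * n
          ≤ max ((x (m+n)).2 - (x (m+n)).1 - ε) 0 * ((m+n:ℕ):ℝ) :=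
            mul_le_mul_of_nonneg_left hcast hemax
        _ = ((m+n:ℕ):ℝ) * max ((x (m+n)).2 - (x (m+n)).1 - ε) 0 := by ring
        _ ≤ _ := hk
    have h1 : L.Λ (fun m => max ((x (m+n)).2 - (x (m+n)).1 - ε) 0) ≤
        L.Λ (fun _ => (max (max ((x 1).2 - (x 1).1 - ε) 0) 3) / n) :=
      banach_mono L hshift (bddseq_const _) hpt
    rw [banach_map_const] at h1
    have h2 := banach_shiftn L (fun t => max ((x t).2 - (x t).1 - ε) 0) hbde n
    rw [← h2]
    exact h1
  -- hence Λ e ≤ 0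
  have hΛe : L.Λ (fun t => max ((x t).2 - (x t).1 - ε) 0) ≤ 0 := by
    by_contra h
    push_neg at h
    obtain ⟨n, hn⟩ := exists_nat_gt ((max (max ((x 1).2 - (x 1).1 - ε) 0) 3) /
      L.Λ (fun t => max ((x t).2 - (x t).1 - ε) 0))
    have hdiv0 : 0 ≤ (max (max ((x 1).2 - (x 1).1 - ε) 0) 3) /
        L.Λ (fun t => max ((x t).2 - (x t).1 - ε) 0) := div_nonneg hC0 h.le
    have hn1 : 1 ≤ n := by
      by_contra hc
      push_neg at hc
      interval_cases n
      simp at hn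
      linarith
    have hnn : (0:ℝ) < (n:ℝ) := by exact_mod_cast hn1
    have := heC n hn1
    have hlt : (max (max ((x 1).2 - (x 1).1 - ε) 0) 3) / n <
        L.Λ (fun t => max ((x t).2 - (x t).1 - ε) 0) := by
      rw [div_lt_iff₀ hnn]
      have := (div_lt_iff₀ h).1 hn
      linarith
    linarith
  -- assemble
  have hsum : L.Λ (fun t => (x t).2) =
      L.Λ (fun t => (x t).1) + L.Λ (fun t => (x t).2 - (x t).1) := by
    have hadd := L.map_add (fun t => (x t).1) (fun t => (x t).2 - (x t).1) hbd1 hbdd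
    have heq : ((fun t => (x t).1) + fun t => (x t).2 - (x t).1) = fun t => (x t).2 := by
      funext t; simp
    rw [heq] at hadd
    linarith
  have hmono : L.Λ (fun t => (x t).2 - (x t).1) ≤
      L.Λ (fun t => ε + max ((x t).2 - (x t).1 - ε) 0) := by
    refine banach_mono L hbdd (bddseq_add (bddseq_const ε) hbde) fun n => ?_
    have := le_max_left ((x n).2 - (x n).1 - ε) 0
    linarith
  have hsplit : L.Λ (fun t => ε + max ((x t).2 - (x t).1 - ε) 0) =
      ε + L.Λ (fun t => max ((x t).2 - (x t).1 - ε) 0) := by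
    have hadd := L.map_add (fun _ => ε) (fun t => max ((x t).2 - (x t).1 - ε) 0)
      (bddseq_const ε) hbde
    have heq : ((fun _ : ℕ => ε) + fun t => max ((x t).2 - (x t).1 - ε) 0) =
        fun t => ε + max ((x t).2 - (x t).1 - ε) 0 := rfl
    rw [heq, banach_map_const] at hadd
    exact hadd
  linarith
end

section
/- (Deterministic Blackwell approachability.) Let W ⊆ 𝔖 be a closed nonempty set and let (x̄_t)_{t≥t₀} be a trajectory of the dynamical system induced by f. Suppose that for every t ≥ t₀ there exists y_t ∈ W such that ‖x̄_t − y_t‖ = dist(x̄_t, W) and ⟨x̄_t − y_t, f(x̄_t) − y_t⟩ ≤ 0 (Euclidean inner product). Then dist(x̄_t, W) → 0 as t → ∞. -/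
/- Dynamical systems generated by memory-strategy profiles (Section 3 of the paper).
   `S` plays the role of 𝔖 ⊆ ℝ^N (a nonempty bounded convex set, in the paper the
   convex hull of the vector payoffs), and `f : E N → E N` plays the role of the
   map `f^s = u ∘ s` induced by a memory-strategy profile `s` (so `f` maps `S` to `S`). -/

/-- Euclidean space ℝ^N. -/
abbrev E (N : ℕ) := EuclideanSpace ℝ (Fin N)

/-- `x` is a trajectory of the dynamical system induced by `f`, starting at stage
`t₀ ≥ 1` from an initial point `x t₀ ∈ S`: it is a sequence in `S` with
x̄_{t+1} = (t·x̄_t + f(x̄_t))/(t+1) for all t ≥ t₀. -/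
def IsTraj {N : ℕ} (S : Set (E N)) (f : E N → E N) (t₀ : ℕ) (x : ℕ → E N) : Prop :=
  1 ≤ t₀ ∧ (∀ t : ℕ, t₀ ≤ t → x t ∈ S) ∧
    ∀ t : ℕ, t₀ ≤ t → x (t + 1) = ((t : ℝ) + 1)⁻¹ • ((t : ℝ) • x t + f (x t))

/-- A set `Z` is invariant for the dynamical system induced by `f`:
there is `t_Z ≥ 1` such that for every `x ∈ Z` and every `t ≥ t_Z`,
(t·x + f(x))/(t+1) ∈ Z. -/
def Invariant {N : ℕ} (f : E N → E N) (Z : Set (E N)) : Prop :=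
  ∃ tZ : ℕ, 1 ≤ tZ ∧ ∀ x ∈ Z, ∀ t : ℕ, tZ ≤ t →
    ((t : ℝ) + 1)⁻¹ • ((t : ℝ) • x + f x) ∈ Z

/-- A set `Z` is an escape set: along every trajectory, for every `τ ≥ t₀` there is
`t > τ` with `x t ∉ Z`. -/
def EscapeSet {N : ℕ} (S : Set (E N)) (f : E N → E N) (Z : Set (E N)) : Prop :=
  ∀ (t₀ : ℕ) (x : ℕ → E N), IsTraj S f t₀ x →
    ∀ τ : ℕ, t₀ ≤ τ → ∃ t : ℕ, τ < t ∧ x t ∉ Z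

/-- A set `Z` is absorbing: along every trajectory, for every `τ ≥ t₀` there is
`t > τ` with `x t ∈ Z`. -/
def AbsorbingSet {N : ℕ} (S : Set (E N)) (f : E N → E N) (Z : Set (E N)) : Prop :=
  ∀ (t₀ : ℕ) (x : ℕ → E N), IsTraj S f t₀ x →
    ∀ τ : ℕ, t₀ ≤ τ → ∃ t : ℕ, τ < t ∧ x t ∈ Z

open Filter Metric

/-!
Let `d_t = dist(x̄_t, W)` and let `y_t` be the proximal point of the hypothesis. Since
`x̄_{t+1} - y_t = (t (x̄_t - y_t) + (f(x̄_t) - y_t)) / (t + 1)` and the cross term is nonpositive,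
`(t+1)² d_{t+1}² ≤ (t+1)² ‖x̄_{t+1} - y_t‖² ≤ t² d_t² + (diam 𝔖)²`. Hence `t² d_t²` grows at most
linearly, so `d_t² = O(1/t)`.
-/

open Topology

theorem sq_mul_norm_average_sub_sq_le {F : Type*} [NormedAddCommGroup F] [InnerProductSpace ℝ F]
    {x y z : F} {t : ℝ} (ht : 0 ≤ t) (hobtuse : inner ℝ (x - y) (z - y) ≤ 0) :
    (t + 1) ^ 2 * ‖(t + 1)⁻¹ • (t • x + z) - y‖ ^ 2 ≤ t ^ 2 * ‖x - y‖ ^ 2 + ‖z - y‖ ^ 2 := by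
  have hpos : 0 < t + 1 := by linarith
  have hrecenter : (t + 1)⁻¹ • (t • x + z) - y = (t + 1)⁻¹ • (t • (x - y) + (z - y)) := by
    match_scalars <;> field_simp; ring
  rw [hrecenter, norm_smul, Real.norm_of_nonneg (inv_nonneg.mpr hpos.le), mul_pow,
    ← mul_assoc, ← mul_pow, mul_inv_cancel₀ hpos.ne', one_pow, one_mul, norm_add_sq_real,
    real_inner_smul_left, norm_smul, Real.norm_of_nonneg ht, mul_pow]
  nlinarith [mul_nonpos_of_nonneg_of_nonpos ht hobtuse]

theorem sq_mul_sq_le_of_sq_mul_sq_le_add {d : ℕ → ℝ} {C : ℝ} {t₀ : ℕ} (hC : 0 ≤ C)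
    (hstep : ∀ t, t₀ ≤ t → ((t : ℝ) + 1) ^ 2 * d (t + 1) ^ 2 ≤ (t : ℝ) ^ 2 * d t ^ 2 + C) :
    ∀ t, t₀ ≤ t → (t : ℝ) ^ 2 * d t ^ 2 ≤ (t₀ : ℝ) ^ 2 * d t₀ ^ 2 + C * t := by
  intro t ht
  induction t, ht using Nat.le_induction with
  | base => nlinarith [(t₀.cast_nonneg : (0 : ℝ) ≤ t₀)]
  | succ n hn ih => push_cast; linarith [hstep n hn]

theorem tendsto_zero_of_sq_mul_sq_le_add {d : ℕ → ℝ} {C : ℝ} {t₀ : ℕ} (hd : ∀ t, 0 ≤ d t)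
    (hC : 0 ≤ C)
    (hstep : ∀ t, t₀ ≤ t → ((t : ℝ) + 1) ^ 2 * d (t + 1) ^ 2 ≤ (t : ℝ) ^ 2 * d t ^ 2 + C) :
    Tendsto d atTop (𝓝 0) := by
  set A := (t₀ : ℝ) ^ 2 * d t₀ ^ 2
  have hbound : Tendsto (fun t : ℕ => A / (t : ℝ) ^ 2 + C / t) atTop (𝓝 0) := by
    have hA := tendsto_const_nhds (x := A) |>.div_atTop
      ((tendsto_pow_atTop two_ne_zero).comp tendsto_natCast_atTop_atTop)
    simpa using hA.add (tendsto_const_nhds.div_atTop tendsto_natCast_atTop_atTop)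
  have hsq : Tendsto (fun t => d t ^ 2) atTop (𝓝 0) := by
    refine squeeze_zero' (.of_forall fun t => sq_nonneg _) ?_ hbound
    filter_upwards [eventually_ge_atTop t₀, eventually_gt_atTop 0] with t ht ht0
    have htpos : (0 : ℝ) < t := Nat.cast_pos.mpr ht0
    have hlin := sq_mul_sq_le_of_sq_mul_sq_le_add hC hstep t ht
    rw [div_add_div _ _ (by positivity) htpos.ne', le_div_iff₀ (by positivity)]
    nlinarith
  simpa [Real.sqrt_sq (hd _)] using hsq.sqrt

theorem IsTraj.sq_mul_sq_infDist_succ_le {N : ℕ} {S W : Set (E N)} {f : E N → E N} {t₀ : ℕ}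
    {x : ℕ → E N} (hx : IsTraj S f t₀ x) (hSbdd : Bornology.IsBounded S) (hf : Set.MapsTo f S S)
    (hWS : W ⊆ S) {t : ℕ} (ht : t₀ ≤ t) {y : E N} (hyW : y ∈ W)
    (hyprox : ‖x t - y‖ = infDist (x t) W) (hobtuse : inner ℝ (x t - y) (f (x t) - y) ≤ 0) :
    ((t : ℝ) + 1) ^ 2 * infDist (x (t + 1)) W ^ 2
      ≤ (t : ℝ) ^ 2 * infDist (x t) W ^ 2 + diam S ^ 2 := by
  obtain ⟨-, hxS, hrec⟩ := hx
  have hnext : infDist (x (t + 1)) W ≤ ‖x (t + 1) - y‖ :=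
    dist_eq_norm (x (t + 1)) y ▸ infDist_le_dist_of_mem hyW
  have hjump : ‖f (x t) - y‖ ≤ diam S :=
    dist_eq_norm (f (x t)) y ▸ dist_le_diam_of_mem hSbdd (hf (hxS t ht)) (hWS hyW)
  calc ((t : ℝ) + 1) ^ 2 * infDist (x (t + 1)) W ^ 2
      ≤ ((t : ℝ) + 1) ^ 2 * ‖x (t + 1) - y‖ ^ 2 := by gcongr; exact infDist_nonneg
    _ ≤ (t : ℝ) ^ 2 * ‖x t - y‖ ^ 2 + ‖f (x t) - y‖ ^ 2 := by
      rw [hrec t ht]; exact sq_mul_norm_average_sub_sq_le t.cast_nonneg hobtuse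
    _ ≤ (t : ℝ) ^ 2 * infDist (x t) W ^ 2 + diam S ^ 2 := by
      rw [hyprox]; gcongr

theorem stmt4_general {N : ℕ} (S : Set (E N))
    (hSbdd : Bornology.IsBounded S)
    (f : E N → E N) (hf : Set.MapsTo f S S)
    (W : Set (E N)) (hWS : W ⊆ S)
    (t₀ : ℕ) (x : ℕ → E N) (hx : IsTraj S f t₀ x)
    (hprox : ∀ t : ℕ, t₀ ≤ t → ∃ y ∈ W,
      ‖x t - y‖ = infDist (x t) W ∧ (inner ℝ (x t - y) (f (x t) - y) : ℝ) ≤ 0) :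
    Tendsto (fun t => infDist (x t) W) atTop (nhds 0) := by
  refine tendsto_zero_of_sq_mul_sq_le_add (t₀ := t₀) (fun _ => infDist_nonneg)
    (sq_nonneg (diam S)) fun t ht => ?_
  obtain ⟨y, hyW, hyprox, hobtuse⟩ := hprox t ht
  exact hx.sq_mul_sq_infDist_succ_le hSbdd hf hWS ht hyW hyprox hobtuse

/-- Deterministic Blackwell approachability (Proposition 3.1): if `W ⊆ S` is closed
and nonempty and along the trajectory each `x̄_t` has a proximal point `y_t ∈ W`
with ⟨x̄_t − y_t, f(x̄_t) − y_t⟩ ≤ 0, then dist(x̄_t, W) → 0. -/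
theorem stmt4 {N : ℕ} (S : Set (E N)) (hSconv : Convex ℝ S)
    (hSbdd : Bornology.IsBounded S) (hSne : S.Nonempty)
    (f : E N → E N) (hf : Set.MapsTo f S S)
    (W : Set (E N)) (hWS : W ⊆ S) (hWclosed : IsClosed W) (hWne : W.Nonempty)
    (t₀ : ℕ) (x : ℕ → E N) (hx : IsTraj S f t₀ x)
    (hprox : ∀ t : ℕ, t₀ ≤ t → ∃ y ∈ W,
      ‖x t - y‖ = infDist (x t) W ∧ (inner ℝ (x t - y) (f (x t) - y) : ℝ) ≤ 0) :
    Tendsto (fun t => infDist (x t) W) atTop (nhds 0) :=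
  stmt4_general S hSbdd f hf W hWS t₀ x hx hprox
end

section
/- Let W ⊆ 𝔖 be a closed convex set and let (x̄_t)_{t≥t₀} be a trajectory of the dynamical system induced by f. If there exists t̄ ≥ t₀ such that f(x̄_t) ∈ W for all t > t̄, then for every ε > 0 there exists t_ε > t̄ such that x̄_t lies in the closed ε-neighbourhood W^ε of W for all t > t_ε; that is, dist(x̄_t, W) → 0 as t → ∞. -/
open Filter Metric

/-- Corollary 3.2: if `W ⊆ S` is closed and convex and `f(x̄_t) ∈ W` for all `t > t̄`,
then for every ε > 0 the trajectory eventually stays in the closed ε-neighbourhood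
of `W`; that is, dist(x̄_t, W) → 0. -/
theorem stmt5 {N : ℕ} (S : Set (E N)) (hSconv : Convex ℝ S)
    (hSbdd : Bornology.IsBounded S) (hSne : S.Nonempty)
    (f : E N → E N) (hf : Set.MapsTo f S S)
    (W : Set (E N)) (hWS : W ⊆ S) (hWclosed : IsClosed W) (hWconv : Convex ℝ W)
    (t₀ : ℕ) (x : ℕ → E N) (hx : IsTraj S f t₀ x)
    (tbar : ℕ) (htbar : t₀ ≤ tbar) (hfW : ∀ t : ℕ, tbar < t → f (x t) ∈ W) :
    (∀ ε : ℝ, 0 < ε → ∃ tε : ℕ, tbar < tε ∧ ∀ t : ℕ, tε < t →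
      x t ∈ cthickening ε W) ∧
    Tendsto (fun t => infDist (x t) W) atTop (nhds 0) := by
  -- W is nonempty
  have hWne : W.Nonempty := ⟨f (x (tbar + 1)), hfW _ (Nat.lt_succ_self _)⟩
  -- key contraction inequality
  have key : ∀ t : ℕ, tbar < t →
      ((t : ℝ) + 1) * infDist (x (t + 1)) W ≤ (t : ℝ) * infDist (x t) W := by
    intro t ht
    have ht0 : t₀ ≤ t := le_trans htbar ht.le
    have hrec := hx.2.2 t ht0
    have hfw := hfW t ht
    have htpos : (0:ℝ) < (t : ℝ) + 1 := by positivity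
    -- for every w ∈ W, the corresponding convex combination lies in W
    have hdist : ∀ w ∈ W, ((t : ℝ) + 1) * infDist (x (t + 1)) W ≤ (t : ℝ) * dist (x t) w := by
      intro w hw
      set y := ((t : ℝ) + 1)⁻¹ • ((t : ℝ) • w + f (x t)) with hy
      have hyW : y ∈ W := by
        have := hWconv hw hfw (a := (t : ℝ) / ((t : ℝ) + 1)) (b := 1 / ((t : ℝ) + 1))
          (by positivity) (by positivity) (by field_simp)
        convert this using 1
        rw [hy, smul_add, smul_smul]
        congr 2
        · field_simp
        · rw [one_div]
      have hd : dist (x (t + 1)) y = ((t : ℝ) + 1)⁻¹ * ((t : ℝ) * dist (x t) w) := by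
        rw [hrec, hy, dist_eq_norm, ← smul_sub]
        have : (t : ℝ) • x t + f (x t) - ((t : ℝ) • w + f (x t)) = (t : ℝ) • (x t - w) := by
          rw [smul_sub]; abel
        rw [this, norm_smul, norm_smul, Real.norm_of_nonneg (le_of_lt (by positivity)),
          Real.norm_of_nonneg (by positivity), dist_eq_norm]
      have h1 : infDist (x (t + 1)) W ≤ dist (x (t + 1)) y := infDist_le_dist_of_mem hyW
      calc ((t : ℝ) + 1) * infDist (x (t + 1)) W ≤ ((t : ℝ) + 1) * dist (x (t + 1)) y := by
            exact mul_le_mul_of_nonneg_left h1 htpos.le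
        _ = (t : ℝ) * dist (x t) w := by rw [hd]; field_simp
    -- take infimum over w
    refine le_of_forall_pos_le_add ?_
    intro ε hε
    have hlt : infDist (x t) W < infDist (x t) W + ε / ((t : ℝ) + 1) := by
      have : 0 < ε / ((t : ℝ) + 1) := by positivity
      linarith
    obtain ⟨w, hw, hdw⟩ := (infDist_lt_iff hWne).mp hlt
    calc ((t : ℝ) + 1) * infDist (x (t + 1)) W ≤ (t : ℝ) * dist (x t) w := hdist w hw
      _ ≤ (t : ℝ) * (infDist (x t) W + ε / ((t : ℝ) + 1)) := by
          exact mul_le_mul_of_nonneg_left hdw.le (Nat.cast_nonneg t)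
      _ = (t : ℝ) * infDist (x t) W + (t : ℝ) * (ε / ((t : ℝ) + 1)) := by ring
      _ ≤ (t : ℝ) * infDist (x t) W + ε := by
          gcongr
          calc (t : ℝ) * (ε / ((t : ℝ) + 1)) ≤ ((t : ℝ) + 1) * (ε / ((t : ℝ) + 1)) := by
                gcongr; linarith
            _ = ε := by field_simp
  -- monotone: for t ≥ tbar + 1, t * infDist(x t) ≤ C
  set C : ℝ := ((tbar : ℝ) + 1) * infDist (x (tbar + 1)) W with hC
  have hmono : ∀ t : ℕ, tbar + 1 ≤ t → (t : ℝ) * infDist (x t) W ≤ C := by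
    intro t ht
    induction t, ht using Nat.le_induction with
    | base => simp [hC]
    | succ n hn ih =>
      have := key n (Nat.lt_of_lt_of_le (Nat.lt_succ_self tbar) hn)
      push_cast
      linarith
  have hCnonneg : 0 ≤ C := by
    have := infDist_nonneg (x := x (tbar + 1)) (s := W)
    positivity
  -- the bound infDist (x t) W ≤ C / t eventually, hence tendsto 0
  have hbound : ∀ t : ℕ, tbar + 1 ≤ t → infDist (x t) W ≤ C / (t : ℝ) := by
    intro t ht
    have htpos : (0:ℝ) < (t : ℝ) := by
      have : 1 ≤ t := le_trans (Nat.le_add_left 1 tbar) ht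
      exact_mod_cast this
    rw [le_div_iff₀ htpos, mul_comm]
    exact hmono t ht
  have htend : Tendsto (fun t : ℕ => infDist (x t) W) atTop (nhds 0) := by
    apply squeeze_zero' (Filter.Eventually.of_forall fun t => infDist_nonneg)
      ?_ (tendsto_const_div_atTop_nhds_zero_nat C)
    filter_upwards [Filter.eventually_ge_atTop (tbar + 1)] with t ht
    exact hbound t ht
  refine ⟨?_, htend⟩
  intro ε hε
  obtain ⟨n₀, hn₀⟩ := (htend.eventually (gt_mem_nhds hε)).exists_forall_of_atTop
  refine ⟨max n₀ (tbar + 1), lt_of_lt_of_le (Nat.lt_succ_self tbar) (le_max_right _ _), ?_⟩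
  intro t htt
  have h1 : infDist (x t) W < ε := hn₀ t (le_trans (le_max_left _ _) htt.le)
  obtain ⟨w, hw, hdw⟩ := (infDist_lt_iff hWne).mp h1
  exact mem_cthickening_of_dist_le _ w ε W hw hdw.le
end

section
/- Let (a_n)_{n≥1} be a bounded sequence of real numbers and let ā_n = (1/n)·∑_{k=1}^n a_k be its sequence of arithmetic means. Suppose there are a constant c ∈ ℝ and an index N such that for all n ≥ N, if ā_n > c then a_{n+1} ≤ c. Then limsup_{n→∞} ā_n ≤ c. -/
open Filter

/-- Corollary 3.3: let `a` be a bounded real sequence (indexed from 1) and let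
ā_n = (1/n)·∑_{k=1}^n a_k. If for some constant `c` and almost all `n`
(`n ≥ N`) we have ā_n > c → a_{n+1} ≤ c, then limsup ā_n ≤ c. -/
theorem stmt6 (a : ℕ → ℝ) (hbdd : ∃ M : ℝ, ∀ n : ℕ, |a n| ≤ M)
    (c : ℝ) (N : ℕ)
    (h : ∀ n : ℕ, N ≤ n → (1 / (n : ℝ)) * ∑ k ∈ Finset.Icc 1 n, a k > c → a (n + 1) ≤ c) :
    limsup (fun n : ℕ => (1 / (n : ℝ)) * ∑ k ∈ Finset.Icc 1 n, a k) atTop ≤ c := by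
  obtain ⟨M, hM⟩ := hbdd
  set S : ℕ → ℝ := fun n => ∑ k ∈ Finset.Icc 1 n, a k with hS
  have hM0 : 0 ≤ M := le_trans (abs_nonneg _) (hM 0)
  have hSabs : ∀ n : ℕ, |S n| ≤ n * M := by
    intro n
    calc |S n| ≤ ∑ k ∈ Finset.Icc 1 n, |a k| := Finset.abs_sum_le_sum_abs _ _
      _ ≤ ∑ k ∈ Finset.Icc 1 n, M := Finset.sum_le_sum fun k _ => hM k
      _ = n * M := by simp [Nat.card_Icc]
  have hub : ∀ n : ℕ, |(1 / (n : ℝ)) * S n| ≤ M := by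
    intro n
    rcases Nat.eq_zero_or_pos n with h0 | h0
    · simp [h0, hM0, hS]
    · have hn : (0:ℝ) < n := by exact_mod_cast h0
      rw [abs_mul, abs_of_pos (by positivity : (0:ℝ) < 1/(n:ℝ))]
      calc (1/(n:ℝ)) * |S n| ≤ (1/(n:ℝ)) * (n * M) :=
            mul_le_mul_of_nonneg_left (hSabs n) (by positivity)
        _ = M := by field_simp
  have hcob : IsCoboundedUnder (· ≤ ·) atTop (fun n : ℕ => (1/(n:ℝ)) * S n) := by
    apply IsBoundedUnder.isCoboundedUnder_le
    refine ⟨-M, ?_⟩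
    rw [eventually_map]
    exact Eventually.of_forall fun n => (abs_le.mp (hub n)).1
  refine le_of_forall_pos_le_add fun ε hε => ?_
  obtain ⟨n1, hn1⟩ := exists_nat_ge ((M - c)/ε)
  set n0 := max (max N 1) n1 with hn0def
  have hn0N : N ≤ n0 := le_trans (le_max_left _ _) (le_max_left _ _)
  have hn0pos : 1 ≤ n0 := le_trans (le_max_right _ _) (le_max_left _ _)
  have hMc : M - c ≤ ε * n0 := by
    have h1 : (M - c)/ε ≤ (n0:ℝ) := le_trans hn1 (by exact_mod_cast le_max_right _ _)
    calc M - c = (M - c)/ε * ε := by field_simp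
      _ ≤ (n0:ℝ) * ε := mul_le_mul_of_nonneg_right h1 hε.le
      _ = ε * n0 := mul_comm _ _
  have key : ∀ n, n0 ≤ n → S n - c * n ≤ max (ε * n) (S n0 - c * n0) := by
    intro n hn
    induction n, hn using Nat.le_induction with
    | base => exact le_max_right _ _
    | succ n hn ih =>
      have hn1' : 1 ≤ n := le_trans hn0pos hn
      have hnpos : (0:ℝ) < n := by exact_mod_cast hn1'
      have hSsucc : S (n+1) = S n + a (n+1) := by
        rw [hS]
        exact Finset.sum_Icc_succ_top (Nat.le_add_left 1 n) a
      push_cast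
      by_cases hc : S n - c * n > 0
      · have hu : (1/(n:ℝ)) * S n > c := by
          have h2 : c < S n / n := by
            rw [lt_div_iff₀ hnpos]; linarith
          calc c < S n / (n:ℝ) := h2
            _ = 1/(n:ℝ) * S n := by ring
        have ha := h n (le_trans hn0N hn) hu
        have hstep : S (n+1) - c*((n:ℝ)+1) ≤ S n - c * n := by
          rw [hSsucc]; linarith
        refine le_trans hstep (le_trans ih (max_le_max ?_ le_rfl))
        nlinarith [hε.le]
      · push_neg at hc
        have ha := (abs_le.mp (hM (n+1))).2
        have hε1 : ε * n0 ≤ ε * (n+1) := by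
          have : (n0:ℝ) ≤ n + 1 := by exact_mod_cast Nat.le_succ_of_le hn
          nlinarith [hε.le]
        have : S (n+1) - c*((n:ℝ)+1) ≤ ε*((n:ℝ)+1) := by
          rw [hSsucc]; linarith
        exact le_trans this (le_max_left _ _)
  obtain ⟨n2, hn2⟩ := exists_nat_ge ((S n0 - c*n0)/ε)
  have hev : ∀ᶠ n : ℕ in atTop, (1/(n:ℝ)) * S n ≤ c + ε := by
    filter_upwards [eventually_ge_atTop (max n0 n2)] with n hn
    have hnn0 : n0 ≤ n := le_trans (le_max_left _ _) hn
    have hnn2 : n2 ≤ n := le_trans (le_max_right _ _) hn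
    have hnpos : (0:ℝ) < n := by
      have : 1 ≤ n := le_trans hn0pos hnn0
      exact_mod_cast this
    have h2 : S n0 - c*n0 ≤ ε * n := by
      have h1 : (S n0 - c*n0)/ε ≤ (n:ℝ) := le_trans hn2 (by exact_mod_cast hnn2)
      calc S n0 - c*n0 = (S n0 - c*n0)/ε * ε := by field_simp
        _ ≤ (n:ℝ) * ε := mul_le_mul_of_nonneg_right h1 hε.le
        _ = ε * n := mul_comm _ _
    have h3 := key n hnn0
    have h4 : S n - c * n ≤ ε * n := le_trans h3 (max_le le_rfl h2)
    rw [one_div, inv_mul_le_iff₀ hnpos]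
    linarith
  exact limsup_le_of_le hcob hev
end

section
/- Let V be the closed convex hull of f(𝔖), let ε > 0, and suppose V^ε = A ∪ B ∪ C ∪ Z where the sets A, B, C are pairwise disjoint. Suppose that the set B ∪ C ∪ Z is invariant and that A and C are escape sets. If there exist a convex set W ⊆ V^ε and δ > 0 such that f(B ∪ C) ⊆ W and W^δ ∩ (B \ Z) = ∅, then the set Z is absorbing. -/
open Filter Metric

/-! Along a trajectory, `x̄_t` is the running average of the points `f(x̄_s)`. Once these all lie in
a convex set `K`, the distance from `x̄_t` to `K` decays like `1/t`, so the trajectory enters every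
neighbourhood `K^η` for good. With `K = V` this confines the trajectory eventually to
`V^ε = A ∪ B ∪ C ∪ Z`. If it stayed out of `Z` from some time on, invariance of `B ∪ C ∪ Z` would
trap it in `B ∪ C` as soon as it leaves `A`; then `f(x̄_t) ∈ W`, so the trajectory enters `W^δ`,
which misses `B \ Z`, and it would stay in `C` for good, contradicting that `C` is an escape set. -/

theorem Filter.eventually_atTop_of_frequently_of_eventually_imp_succ {p : ℕ → Prop}
    (hstep : ∀ᶠ n in atTop, p n → p (n + 1)) (hfreq : ∃ᶠ n in atTop, p n) :
    ∀ᶠ n in atTop, p n := by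
  obtain ⟨N, hN⟩ := eventually_atTop.1 hstep
  obtain ⟨m, hmN, hm⟩ := frequently_atTop.1 hfreq N
  refine eventually_atTop.2 ⟨m, fun n hmn => ?_⟩
  induction n, hmn using Nat.le_induction with
  | base => exact hm
  | succ n hmn ih => exact hN n (hmN.trans hmn) ih

section Averaging

variable {F : Type*} [NormedAddCommGroup F] [NormedSpace ℝ F] {K : Set F} {x y : ℕ → F}

theorem Convex.exists_mem_mul_norm_sub_le_of_average (hK : Convex ℝ K) {a : ℕ}
    (hrec : ∀ t ≥ a, x (t + 1) = ((t : ℝ) + 1)⁻¹ • ((t : ℝ) • x t + y t))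
    (hy : ∀ t ≥ a, y t ∈ K) :
    ∀ s ≥ a, ∃ k ∈ K, s * ‖x s - k‖ ≤ a * ‖x a - y a‖ := by
  intro s hs
  induction s, hs using Nat.le_induction with
  | base => exact ⟨y a, hy a le_rfl, le_rfl⟩
  | succ s hs ih =>
    obtain ⟨k, hk, hbound⟩ := ih
    have hs1 : (0 : ℝ) < s + 1 := by positivity
    -- the next average of the approximants `k` stays in `K` and keeps the same error `s • (x s - k)`
    refine ⟨((s : ℝ) + 1)⁻¹ • ((s : ℝ) • k + y s), ?_, ?_⟩
    · convert hK hk (hy s hs) (a := s / (s + 1)) (b := 1 / (s + 1)) (by positivity)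
        (by positivity) (by field_simp) using 1
      match_scalars <;> field_simp
    · have herr : x (s + 1) - ((s : ℝ) + 1)⁻¹ • ((s : ℝ) • k + y s)
          = ((s : ℝ) + 1)⁻¹ • ((s : ℝ) • (x s - k)) := by
        rw [hrec s hs]; module
      rw [herr, norm_smul, norm_smul, Real.norm_of_nonneg (inv_pos.2 hs1).le,
        Real.norm_of_nonneg s.cast_nonneg]
      push_cast
      calc ((s : ℝ) + 1) * (((s : ℝ) + 1)⁻¹ * (s * ‖x s - k‖)) = s * ‖x s - k‖ := by
            field_simp
        _ ≤ a * ‖x a - y a‖ := hbound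

theorem Convex.eventually_mem_cthickening_of_average (hK : Convex ℝ K)
    (hrec : ∀ᶠ t in atTop, x (t + 1) = ((t : ℝ) + 1)⁻¹ • ((t : ℝ) • x t + y t))
    (hy : ∀ᶠ t in atTop, y t ∈ K) {η : ℝ} (hη : 0 < η) :
    ∀ᶠ t in atTop, x t ∈ Metric.cthickening η K := by
  obtain ⟨a, ha⟩ := eventually_atTop.1 (hrec.and hy)
  have hbound := hK.exists_mem_mul_norm_sub_le_of_average (fun t ht => (ha t ht).1)
    fun t ht => (ha t ht).2
  have hsmall : ∀ᶠ t : ℕ in atTop, a * ‖x a - y a‖ / t < η :=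
    (tendsto_const_div_atTop_nhds_zero_nat _).eventually_lt_const hη
  filter_upwards [hsmall, eventually_ge_atTop a, eventually_ge_atTop 1] with t hsmall hat ht1
  obtain ⟨k, hk, hkt⟩ := hbound t hat
  have htpos : (0 : ℝ) < t := by exact_mod_cast ht1
  refine mem_cthickening_of_dist_le _ k η K hk ?_
  rw [dist_eq_norm]
  exact (le_div_iff₀' htpos |>.2 hkt).trans hsmall.le

end Averaging

section Trajectories

variable {N : ℕ} {S : Set (E N)} {f : E N → E N} {t₀ : ℕ} {x : ℕ → E N}

theorem IsTraj.eventually_mem_cthickening (hx : IsTraj S f t₀ x) {K : Set (E N)}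
    (hK : Convex ℝ K) (hfK : ∀ᶠ t in atTop, f (x t) ∈ K) {η : ℝ} (hη : 0 < η) :
    ∀ᶠ t in atTop, x t ∈ cthickening η K :=
  hK.eventually_mem_cthickening_of_average (eventually_atTop.2 ⟨t₀, hx.2.2⟩) hfK hη

theorem IsTraj.eventually_mem_cthickening_closure_convexHull (hx : IsTraj S f t₀ x) {ε : ℝ}
    (hε : 0 < ε) : ∀ᶠ t in atTop, x t ∈ cthickening ε (closure (convexHull ℝ (f '' S))) :=
  hx.eventually_mem_cthickening (convex_convexHull ℝ _).closure
    (eventually_atTop.2 ⟨t₀, fun t ht =>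
      subset_closure (subset_convexHull ℝ _ (Set.mem_image_of_mem f (hx.2.1 t ht)))⟩) hε

theorem Invariant.eventually_mem_succ {Y : Set (E N)} (hY : Invariant f Y)
    (hx : IsTraj S f t₀ x) : ∀ᶠ t in atTop, x t ∈ Y → x (t + 1) ∈ Y := by
  obtain ⟨tY, -, hY⟩ := hY
  filter_upwards [eventually_ge_atTop tY, eventually_ge_atTop t₀] with t htY ht₀ hxt
  rw [hx.2.2 t ht₀]
  exact hY _ hxt t htY

theorem EscapeSet.frequently_notMem {Y : Set (E N)} (hY : EscapeSet S f Y)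
    (hx : IsTraj S f t₀ x) : ∃ᶠ t in atTop, x t ∉ Y :=
  frequently_atTop.2 fun n =>
    let ⟨t, hnt, ht⟩ := hY t₀ x hx (max n t₀) (le_max_right n t₀)
    ⟨t, (le_max_left n t₀).trans hnt.le, ht⟩

theorem AbsorbingSet.of_frequently {Y : Set (E N)}
    (hY : ∀ t₀ x, IsTraj S f t₀ x → ∃ᶠ t in atTop, x t ∈ Y) : AbsorbingSet S f Y :=
  fun t₀ x hx τ _ =>
    let ⟨t, hτt, ht⟩ := frequently_atTop.1 (hY t₀ x hx) (τ + 1)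
    ⟨t, hτt, ht⟩

end Trajectories

theorem stmt7_general {N : ℕ} (S : Set (E N))
    (f : E N → E N)
    (ε : ℝ) (hε : 0 < ε)
    (A B C Z : Set (E N))
    (hV : cthickening ε (closure (convexHull ℝ (f '' S))) = A ∪ B ∪ C ∪ Z)
    (hInv : Invariant f (B ∪ C ∪ Z))
    (hA : EscapeSet S f A) (hC : EscapeSet S f C)
    (W : Set (E N)) (hWconv : Convex ℝ W)
    (δ : ℝ) (hδ : 0 < δ)
    (hfW : f '' (B ∪ C) ⊆ W)
    (hWδ : cthickening δ W ∩ (B \ Z) = ∅) :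
    AbsorbingSet S f Z := by
  refine AbsorbingSet.of_frequently fun t₀ x hx => ?_
  by_contra hZ
  rw [not_frequently] at hZ
  have hABCZ : ∀ᶠ t in atTop, x t ∈ A ∪ B ∪ C ∪ Z :=
    hV ▸ hx.eventually_mem_cthickening_closure_convexHull hε
  have hstep : ∀ᶠ t in atTop, x t ∈ B ∪ C → x (t + 1) ∈ B ∪ C := by
    filter_upwards [hInv.eventually_mem_succ hx, (tendsto_add_atTop_nat 1).eventually hZ]
      with t hsucc hnZ hBC
    exact (hsucc (Or.inl hBC)).resolve_right hnZ
  have hBC : ∀ᶠ t in atTop, x t ∈ B ∪ C := by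
    refine eventually_atTop_of_frequently_of_eventually_imp_succ hstep
      ((hA.frequently_notMem hx).mp ?_)
    filter_upwards [hABCZ, hZ] with t hABCZ hnZ hnA
    simp_all only [Set.mem_union, false_or, or_false]
  have hWδ' : ∀ᶠ t in atTop, x t ∈ cthickening δ W :=
    hx.eventually_mem_cthickening hWconv (hBC.mono fun t ht => hfW ⟨x t, ht, rfl⟩) hδ
  have hCev : ∀ᶠ t in atTop, x t ∈ C := by
    filter_upwards [hBC, hWδ', hZ] with t hBC hW hnZ
    refine hBC.resolve_left fun hB => ?_
    exact (Set.eq_empty_iff_forall_notMem.1 hWδ) (x t) ⟨hW, hB, hnZ⟩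
  obtain ⟨t, hnC, hC⟩ := ((hC.frequently_notMem hx).and_eventually hCev).exists
  exact hnC hC

/-- Lemma 3.4: let `V` be the closed convex hull of `f(S)`, `ε > 0` and suppose
`V^ε = A ∪ B ∪ C ∪ Z` with `A, B, C` pairwise disjoint, `B ∪ C ∪ Z` invariant and
`A, C` escape sets. If there are a convex set `W ⊆ V^ε` and `δ > 0` with
`f(B ∪ C) ⊆ W` and `W^δ ∩ (B \ Z) = ∅`, then `Z` is absorbing. -/
theorem stmt7 {N : ℕ} (S : Set (E N)) (hSconv : Convex ℝ S)
    (hSbdd : Bornology.IsBounded S) (hSne : S.Nonempty)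
    (f : E N → E N) (hf : Set.MapsTo f S S)
    (ε : ℝ) (hε : 0 < ε)
    (A B C Z : Set (E N))
    (hV : cthickening ε (closure (convexHull ℝ (f '' S))) = A ∪ B ∪ C ∪ Z)
    (hAB : Disjoint A B) (hAC : Disjoint A C) (hBC : Disjoint B C)
    (hInv : Invariant f (B ∪ C ∪ Z))
    (hA : EscapeSet S f A) (hC : EscapeSet S f C)
    (W : Set (E N)) (hWconv : Convex ℝ W)
    (hWV : W ⊆ cthickening ε (closure (convexHull ℝ (f '' S))))
    (δ : ℝ) (hδ : 0 < δ)
    (hfW : f '' (B ∪ C) ⊆ W)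
    (hWδ : cthickening δ W ∩ (B \ Z) = ∅) :
    AbsorbingSet S f Z :=
  stmt7_general S f ε hε A B C Z hV hInv hA hC W hWconv δ hδ hfW hWδ
end

section
/- Assume that a set D ⊆ 𝔖 is both invariant and absorbing and that D = B ∪ Z. If there exist a closed convex set W ⊆ 𝔖 and ε > 0 such that f(B) ⊆ W and W^ε ∩ (B \ Z) = ∅, then the set Z is absorbing. -/
open Filter Metric

/-- Lemma 3.5: if `D ⊆ S` is invariant and absorbing, `D = B ∪ Z`, and there are a
closed convex set `W ⊆ S` and `ε > 0` with `f(B) ⊆ W` and `W^ε ∩ (B \ Z) = ∅`,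
then `Z` is absorbing. -/
theorem stmt8 {N : ℕ} (S : Set (E N)) (hSconv : Convex ℝ S)
    (hSbdd : Bornology.IsBounded S) (hSne : S.Nonempty)
    (f : E N → E N) (hf : Set.MapsTo f S S)
    (D B Z : Set (E N)) (hDS : D ⊆ S)
    (hDinv : Invariant f D) (hDabs : AbsorbingSet S f D)
    (hD : D = B ∪ Z)
    (W : Set (E N)) (hWS : W ⊆ S) (hWclosed : IsClosed W) (hWconv : Convex ℝ W)
    (ε : ℝ) (hε : 0 < ε)
    (hfW : f '' B ⊆ W)
    (hWε : cthickening ε W ∩ (B \ Z) = ∅) :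
    AbsorbingSet S f Z := by
  intro t₀ x htraj τ hτ
  by_contra hcon
  push_neg at hcon
  obtain ⟨htraj1, hxS, hrec⟩ := htraj
  obtain ⟨tD, htD1, hinv⟩ := hDinv
  obtain ⟨T, hTgt, hxTD⟩ := hDabs t₀ x ⟨htraj1, hxS, hrec⟩ (max τ tD)
    (le_trans hτ (le_max_left _ _))
  have hTτ : τ < T := lt_of_le_of_lt (le_max_left τ tD) hTgt
  have hTtD : tD ≤ T := le_of_lt (lt_of_le_of_lt (le_max_right τ tD) hTgt)
  have hTt0 : t₀ ≤ T := le_trans hτ hTτ.le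
  have hD_mem : ∀ s, T ≤ s → x s ∈ D := by
    intro s hs
    induction s, hs using Nat.le_induction with
    | base => exact hxTD
    | succ n hn ih =>
      rw [hrec n (le_trans hTt0 hn)]
      exact hinv _ ih n (le_trans hTtD hn)
  have hBZ : ∀ s, T ≤ s → x s ∈ B \ Z := by
    intro s hs
    have hmem := hD_mem s hs
    rw [hD] at hmem
    have hnz := hcon s (lt_of_lt_of_le hTτ hs)
    rcases hmem with h | h
    · exact ⟨h, hnz⟩
    · exact absurd h hnz
  have hWne : W.Nonempty := ⟨f (x T), hfW ⟨x T, (hBZ T le_rfl).1, rfl⟩⟩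
  have hstep : ∀ s, T ≤ s →
      ((s : ℝ) + 1) * Metric.infDist (x (s + 1)) W ≤ (s : ℝ) * Metric.infDist (x s) W := by
    intro s hs
    obtain ⟨p, hp, hpd⟩ := hWclosed.exists_infDist_eq_dist hWne (x s)
    have hfx : f (x s) ∈ W := hfW ⟨x s, (hBZ s hs).1, rfl⟩
    have hs1 : (0 : ℝ) < (s : ℝ) + 1 := by positivity
    have hqW : (((s : ℝ) + 1)⁻¹ • ((s : ℝ) • p + f (x s))) ∈ W := by
      have h := hWconv hp hfx (by positivity : (0:ℝ) ≤ (s : ℝ) / ((s : ℝ) + 1))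
        (by positivity : (0:ℝ) ≤ 1 / ((s : ℝ) + 1)) (by field_simp)
      convert h using 1
      rw [smul_add, smul_smul]
      congr 1 <;> [skip; rw [one_div]]
      congr 1
      rw [div_eq_inv_mul]
    have hdist : dist (x (s + 1)) (((s : ℝ) + 1)⁻¹ • ((s : ℝ) • p + f (x s)))
        = (s : ℝ) / ((s : ℝ) + 1) * dist (x s) p := by
      rw [hrec s (le_trans hTt0 hs), dist_eq_norm, dist_eq_norm, ← smul_sub]
      have hsub : ((s : ℝ) • x s + f (x s)) - ((s : ℝ) • p + f (x s))
          = (s : ℝ) • (x s - p) := by rw [smul_sub]; abel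
      rw [hsub, smul_smul, norm_smul]
      rw [Real.norm_eq_abs, abs_of_nonneg (by positivity), ← div_eq_inv_mul]
    have h1 : Metric.infDist (x (s + 1)) W
        ≤ (s : ℝ) / ((s : ℝ) + 1) * Metric.infDist (x s) W := by
      calc Metric.infDist (x (s + 1)) W ≤ dist (x (s + 1)) _ :=
            Metric.infDist_le_dist_of_mem hqW
        _ = (s : ℝ) / ((s : ℝ) + 1) * dist (x s) p := hdist
        _ = (s : ℝ) / ((s : ℝ) + 1) * Metric.infDist (x s) W := by rw [hpd]
    calc ((s : ℝ) + 1) * Metric.infDist (x (s + 1)) W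
        ≤ ((s : ℝ) + 1) * ((s : ℝ) / ((s : ℝ) + 1) * Metric.infDist (x s) W) :=
          mul_le_mul_of_nonneg_left h1 hs1.le
      _ = (s : ℝ) * Metric.infDist (x s) W := by field_simp
  have hmono : ∀ s, T ≤ s →
      (s : ℝ) * Metric.infDist (x s) W ≤ (T : ℝ) * Metric.infDist (x T) W := by
    intro s hs
    induction s, hs using Nat.le_induction with
    | base => exact le_rfl
    | succ n hn ih =>
      refine le_trans ?_ ih
      have := hstep n hn
      push_cast
      exact this
  have hT0 : (0 : ℝ) < (T : ℝ) := by
    have : 1 ≤ T := le_trans htD1 hTtD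
    exact_mod_cast this
  set C := (T : ℝ) * Metric.infDist (x T) W with hCdef
  have hC0 : 0 ≤ C := mul_nonneg hT0.le Metric.infDist_nonneg
  obtain ⟨n, hn⟩ := exists_nat_gt (max (T : ℝ) (C / ε))
  have hnT : T ≤ n := by
    have := lt_of_le_of_lt (le_max_left (T : ℝ) (C / ε)) hn
    exact_mod_cast this.le
  have hn0 : (0 : ℝ) < (n : ℝ) := lt_of_lt_of_le hT0 (by exact_mod_cast hnT)
  have hsmall : Metric.infDist (x n) W ≤ ε := by
    have h1 : (n : ℝ) * Metric.infDist (x n) W ≤ C := hmono n hnT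
    have h2 : C / ε < (n : ℝ) := lt_of_le_of_lt (le_max_right _ _) hn
    have h3 : C < (n : ℝ) * ε := by
      rw [div_lt_iff₀ hε] at h2
      linarith
    nlinarith [Metric.infDist_nonneg (x := x n) (s := W)]
  obtain ⟨p, hp, hpd⟩ := hWclosed.exists_infDist_eq_dist hWne (x n)
  have hmemc : x n ∈ Metric.cthickening ε W :=
    Metric.mem_cthickening_of_dist_le (x n) p ε W hp (by rw [← hpd]; exact hsmall)
  have : x n ∈ Metric.cthickening ε W ∩ (B \ Z) := ⟨hmemc, hBZ n hnT⟩
  rw [hWε] at this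
  exact this
end

section
/- Suppose Z ⊆ 𝔖 and f(Z) ⊆ W, where W is a closed convex subset of 𝔖. If there exists ε > 0 such that W^ε ∩ Z = ∅, then Z is an escape set. -/
open Filter Metric

/-- Lemma 3.6: if `Z ⊆ S`, `f(Z) ⊆ W` with `W` a closed convex subset of `S`, and
`W^ε ∩ Z = ∅` for some `ε > 0`, then `Z` is an escape set. -/
theorem stmt9 {N : ℕ} (S : Set (E N)) (hSconv : Convex ℝ S)
    (hSbdd : Bornology.IsBounded S) (hSne : S.Nonempty)
    (f : E N → E N) (hf : Set.MapsTo f S S)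
    (Z : Set (E N)) (hZS : Z ⊆ S)
    (W : Set (E N)) (hWS : W ⊆ S) (hWclosed : IsClosed W) (hWconv : Convex ℝ W)
    (hfZ : f '' Z ⊆ W)
    (ε : ℝ) (hε : 0 < ε) (hWε : cthickening ε W ∩ Z = ∅) :
    EscapeSet S f Z := by
  intro t₀ x hx τ hτ
  by_contra hcon
  push_neg at hcon
  obtain ⟨ht₀, hxS, hrec⟩ := hx
  set τ₁ := τ + 1 with hτ₁
  have hZt : ∀ t, τ₁ ≤ t → x t ∈ Z := fun t ht =>
    hcon t (lt_of_lt_of_le (Nat.lt_succ_self τ) ht)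
  have hWne : W.Nonempty := ⟨f (x τ₁), hfZ ⟨x τ₁, hZt τ₁ le_rfl, rfl⟩⟩
  have ht₀τ₁ : t₀ ≤ τ₁ := hτ.trans (Nat.le_succ τ)
  -- contraction step
  have key : ∀ t, τ₁ ≤ t →
      ((t : ℝ) + 1) * infDist (x (t + 1)) W ≤ (t : ℝ) * infDist (x t) W := by
    intro t ht
    obtain ⟨w, hw, hdw⟩ := hWclosed.exists_infDist_eq_dist hWne (x t)
    have hfxt : f (x t) ∈ W := hfZ ⟨x t, hZt t ht, rfl⟩
    have htpos : (0 : ℝ) < (t : ℝ) + 1 := by positivity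
    have hp : (((t : ℝ) + 1)⁻¹) • ((t : ℝ) • w + f (x t)) ∈ W := by
      have ha : (0 : ℝ) ≤ (t : ℝ) / ((t : ℝ) + 1) := by positivity
      have hb : (0 : ℝ) ≤ 1 / ((t : ℝ) + 1) := by positivity
      have hab : (t : ℝ) / ((t : ℝ) + 1) + 1 / ((t : ℝ) + 1) = 1 := by
        field_simp
      have := hWconv hw hfxt ha hb hab
      convert this using 1
      module
    have hd : dist (x (t + 1)) ((((t : ℝ) + 1)⁻¹) • ((t : ℝ) • w + f (x t)))
        = (t : ℝ) / ((t : ℝ) + 1) * dist (x t) w := by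
      rw [hrec t (ht₀τ₁.trans ht), dist_eq_norm, ← smul_sub]
      have : ((t : ℝ) • x t + f (x t)) - ((t : ℝ) • w + f (x t))
          = (t : ℝ) • (x t - w) := by
        rw [smul_sub]; abel
      rw [this, norm_smul, norm_smul, Real.norm_eq_abs, Real.norm_eq_abs,
        abs_of_pos (inv_pos.mpr htpos), abs_of_nonneg (Nat.cast_nonneg t),
        dist_eq_norm, div_eq_inv_mul, mul_assoc]
    have h1 : infDist (x (t + 1)) W ≤ (t : ℝ) / ((t : ℝ) + 1) * dist (x t) w := by
      rw [← hd]; exact infDist_le_dist_of_mem hp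
    calc ((t : ℝ) + 1) * infDist (x (t + 1)) W
        ≤ ((t : ℝ) + 1) * ((t : ℝ) / ((t : ℝ) + 1) * dist (x t) w) :=
          mul_le_mul_of_nonneg_left h1 htpos.le
      _ = (t : ℝ) * dist (x t) w := by field_simp
      _ = (t : ℝ) * infDist (x t) W := by rw [hdw]
  -- decreasing bound
  have mono : ∀ t, τ₁ ≤ t →
      (t : ℝ) * infDist (x t) W ≤ (τ₁ : ℝ) * infDist (x τ₁) W := by
    intro t ht
    induction t, ht using Nat.le_induction with
    | base => exact le_rfl
    | succ n hn ih =>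
      have := key n hn
      push_cast
      push_cast at this ih
      linarith
  -- lower bound from the thickening hypothesis
  have hlow : ∀ t, τ₁ ≤ t → ε ≤ infDist (x t) W := by
    intro t ht
    have hnot : x t ∉ cthickening ε W := by
      intro hmem
      have : x t ∈ cthickening ε W ∩ Z := ⟨hmem, hZt t ht⟩
      rw [hWε] at this
      exact this
    rw [mem_cthickening_iff, not_le] at hnot
    have h2 := ENNReal.toReal_mono (infEdist_ne_top hWne) hnot.le
    rwa [ENNReal.toReal_ofReal hε.le] at h2
  -- derive a contradiction for large t
  set C := (τ₁ : ℝ) * infDist (x τ₁) W with hC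
  obtain ⟨n, hn⟩ := exists_nat_gt (C / ε)
  set t := max n τ₁ with htdef
  have ht1 : τ₁ ≤ t := le_max_right _ _
  have htn : (n : ℝ) ≤ (t : ℝ) := Nat.cast_le.mpr (le_max_left _ _)
  have h3 : ε * (t : ℝ) ≤ (t : ℝ) * infDist (x t) W := by
    rw [mul_comm]
    exact mul_le_mul_of_nonneg_left (hlow t ht1) (Nat.cast_nonneg t)
  have h4 := mono t ht1
  have h5 : C / ε < (t : ℝ) := lt_of_lt_of_le hn htn
  have h6 : C < ε * (t : ℝ) := by
    rw [div_lt_iff₀ hε] at h5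
    linarith
  linarith
end
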